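/- arXiv:1207.2836 — 8 statements merged into one kernel-verified Lean document; each statement's English description precedes it below -/
import Mathlib

section
/- If h : X × X* → ℝ ∪ {±∞} is a proper, closed (norm-lower-semicontinuous) convex function, then D(J δ_{D(h)}) ⊆ 0⁺D(Jh), i.e. every point of the effective domain of J applied to the indicator of D(h) is a recession direction of the effective domain of Jh. -/
open NormedSpace Classical

noncomputable section

/-- effective domain of an extended-real-valued function -/
def edom {E : Type*} (f : E → EReal) : Set E := {x | f x < ⊤}

/-- indicator function (0 on the set, +∞ off it) -/
def indic {E : Type*} (C : Set E) : E → EReal := fun x => if x ∈ C then 0 else ⊤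

/-- convexity for EReal-valued functions -/
def ErConvex {E : Type*} [AddCommGroup E] [Module ℝ E] (f : E → EReal) : Prop :=
  ∀ x y : E, ∀ a b : ℝ, 0 ≤ a → 0 ≤ b → a + b = 1 →
    f (a • x + b • y) ≤ (a : EReal) * f x + (b : EReal) * f y

/-- recession cone of a set -/
def recc {E : Type*} [AddCommGroup E] [Module ℝ E] (C : Set E) : Set E :=
  {u | ∀ z ∈ C, ∀ t : ℝ, 0 ≤ t → z + t • u ∈ C}

variable (X : Type*) [NormedAddCommGroup X] [NormedSpace ℝ X]

/-- Fenchel conjugate of f : X → EReal, defined on the dual -/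
def conj1 (f : X → EReal) : StrongDual ℝ X → EReal :=
  fun p => ⨆ x : X, ((p x : EReal) - f x)

/-- Fenchel conjugate of h : X × X* → EReal, defined on X* × X** via
⟨(x,x*),(y*,y**)⟩ = ⟨x,y*⟩ + ⟨y**,x*⟩ -/
def conj2 (h : X × StrongDual ℝ X → EReal) : StrongDual ℝ X × StrongDual ℝ (StrongDual ℝ X) → EReal :=
  fun p => ⨆ z : X × StrongDual ℝ X, (((p.1 z.1 + p.2 z.2 : ℝ) : EReal) - h z)

/-- The J operation: (Jh)(x,x*) = h*(x*, x), with X canonically embedded in X** -/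
def Jop (h : X × StrongDual ℝ X → EReal) : X × StrongDual ℝ X → EReal :=
  fun z => conj2 X h (z.2, inclusionInDoubleDual ℝ X z.1)

/-- the duality product as an EReal-valued function on X × X* -/
def pairE : X × StrongDual ℝ X → EReal := fun z => ((z.2 z.1 : ℝ) : EReal)

/-- weak-* closure of a subset of the dual -/
def wcl (S : Set (StrongDual ℝ X)) : Set (StrongDual ℝ X) :=
  StrongDual.toWeakDual ⁻¹' closure (StrongDual.toWeakDual '' S)

/-- monotone subset of X × X* -/
def MonotoneSet (T : Set (X × StrongDual ℝ X)) : Prop :=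
  ∀ p ∈ T, ∀ q ∈ T, 0 ≤ (p.2 - q.2) (p.1 - q.1)

/-- maximal monotone subset of X × X* -/
def MaxMonotone (T : Set (X × StrongDual ℝ X)) : Prop :=
  MonotoneSet X T ∧ ∀ S : Set (X × StrongDual ℝ X), MonotoneSet X S → T ⊆ S → S = T

/-- the Fitzpatrick family of a maximal monotone operator: closed convex functions
majorizing the duality product and coinciding with it on T -/
def FitzFamily (T : Set (X × StrongDual ℝ X)) : Set ((X × StrongDual ℝ X) → EReal) :=
  {h | ErConvex h ∧ LowerSemicontinuous h ∧ (∀ z, pairE X z ≤ h z) ∧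
       ∀ z ∈ T, h z = pairE X z}

/-- lower semicontinuity with respect to the strong × weak-* topology on X × X* -/
def lscSW (h : X × StrongDual ℝ X → EReal) : Prop :=
  LowerSemicontinuous (fun p : X × WeakDual ℝ X => h (p.1, StrongDual.toWeakDual.symm p.2))

end

/-!
Since the symmetric pairing is linear in its first argument, the conjugate supremum gives
`Jh (p + t z) ≤ Jh p + t · J δ_{D(h)} z` for `t ≥ 0`, and both terms on the right are finite.
-/

theorem EReal.iSup_coe_add_sub_lt_top {ι : Type*} {f : ι → EReal} {a c : ι → ℝ} {M : ℝ}
    (ha : ⨆ i, ((a i : EReal) - f i) < ⊤) (hc : ∀ i, f i < ⊤ → c i ≤ M) :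
    ⨆ i, (((a i + c i : ℝ) : EReal) - f i) < ⊤ := by
  refine lt_of_le_of_lt (iSup_le fun i => ?_) (EReal.add_lt_top ha.ne (EReal.coe_ne_top M))
  rcases eq_or_lt_of_le (le_top : f i ≤ ⊤) with hfi | hfi
  · rw [hfi, EReal.sub_top]
    exact bot_le
  · calc ((a i + c i : ℝ) : EReal) - f i = ((a i : EReal) - f i) + (c i : EReal) := by
          rw [EReal.coe_add, sub_eq_add_neg, sub_eq_add_neg, add_right_comm]
      _ ≤ (⨆ j, ((a j : EReal) - f j)) + M :=
          add_le_add (le_iSup (fun j => (a j : EReal) - f j) i)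
            (EReal.coe_le_coe_iff.mpr (hc i hfi))

section Jop

variable {X : Type*} [NormedAddCommGroup X] [NormedSpace ℝ X]

theorem Jop_apply (h : X × StrongDual ℝ X → EReal) (z : X × StrongDual ℝ X) :
    Jop X h z = ⨆ w : X × StrongDual ℝ X, (((z.2 w.1 + w.2 z.1 : ℝ) : EReal) - h w) := rfl

theorem exists_bound_of_Jop_indic_lt_top {C : Set (X × StrongDual ℝ X)} {z : X × StrongDual ℝ X}
    (hz : Jop X (indic C) z < ⊤) : ∃ M : ℝ, ∀ w ∈ C, z.2 w.1 + w.2 z.1 ≤ M := by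
  obtain ⟨M, hzM, -⟩ := EReal.lt_iff_exists_real_btwn.mp hz
  refine ⟨M, fun w hw => EReal.coe_le_coe_iff.mp (le_of_lt ?_)⟩
  calc ((z.2 w.1 + w.2 z.1 : ℝ) : EReal)
      = ((z.2 w.1 + w.2 z.1 : ℝ) : EReal) - indic C w := by simp [indic, hw]
    _ ≤ Jop X (indic C) z := le_iSup (fun w => ((z.2 w.1 + w.2 z.1 : ℝ) : EReal) - indic C w) w
    _ < M := hzM

theorem pairing_add_smul (p z w : X × StrongDual ℝ X) (t : ℝ) :
    (p + t • z).2 w.1 + w.2 (p + t • z).1 = (p.2 w.1 + w.2 p.1) + t * (z.2 w.1 + w.2 z.1) := by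
  simp only [Prod.snd_add, Prod.fst_add, Prod.smul_snd, Prod.smul_fst, add_apply,
    FunLike.coe_smul, Pi.smul_apply, smul_eq_mul, map_add, map_smul]
  ring

end Jop

theorem statement1_general (X : Type*) [NormedAddCommGroup X] [NormedSpace ℝ X]
    (h : X × StrongDual ℝ X → EReal) :
    edom (Jop X (indic (edom h))) ⊆ recc (edom (Jop X h)) := by
  intro z hz p hp t ht
  obtain ⟨M, hM⟩ := exists_bound_of_Jop_indic_lt_top hz
  change Jop X h (p + t • z) < ⊤
  change Jop X h p < ⊤ at hp
  rw [Jop_apply] at hp ⊢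
  simp_rw [pairing_add_smul]
  exact EReal.iSup_coe_add_sub_lt_top hp fun w hw => mul_le_mul_of_nonneg_left (hM w hw) ht

theorem statement1 (X : Type*) [NormedAddCommGroup X] [NormedSpace ℝ X] [CompleteSpace X]
    (h : X × StrongDual ℝ X → EReal) (hne_bot : ∀ z, h z ≠ ⊥) (hne_top : ∃ z, h z ≠ ⊤)
    (hlsc : LowerSemicontinuous h) (hconv : ErConvex h) :
    edom (Jop X (indic (edom h))) ⊆ recc (edom (Jop X h)) :=
  statement1_general X h
end

section
/- Let h : X × X* → ℝ ∪ {±∞} satisfy (Jh)(x,x*) ≥ ⟨x,x*⟩ for all (x,x*) ∈ X × X*. Then P₂(D(Jh)) = P₁(D(h*) ∩ (X* × X)) and this set is contained in the weak-* closure in X* of the convex hull of P₂(D(h)). -/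
open NormedSpace Classical

/-! Let `Jh(x, x*) = m < ∞` and let the half-space `{φ | φ a ≤ α}` contain `P₂(D(h))`.
Moving `x` to `x + t a` (`t ≥ 0`) raises `Jh(·, x*)` by at most `t α`, while the pairing
`⟨x + t a, x*⟩` grows like `t x*(a)`; since `Jh` majorizes the pairing, `x*(a) ≤ α`.
The weak-* continuous functionals on `X*` are the evaluations at points of `X`, so by
Hahn–Banach the weak-* closed convex hull of `P₂(D(h))` is the intersection of such half-spaces. -/

section

variable {X : Type*} [NormedAddCommGroup X] [NormedSpace ℝ X]

theorem WeakDual.exists_eval_of_continuousLinearMap (g : StrongDual ℝ (WeakDual ℝ X)) :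
    ∃ a : X, ∀ w : WeakDual ℝ X, g w = w a := by
  obtain ⟨a, rfl⟩ := LinearMap.dualEmbedding_surjective (topDualPairing ℝ X) g
  exact ⟨a, fun _ => rfl⟩

theorem exists_lt_eval_of_notMem_wcl {C : Set (StrongDual ℝ X)} (hC : Convex ℝ C)
    {y : StrongDual ℝ X} (hy : y ∉ wcl X C) :
    ∃ (a : X) (α : ℝ), α < y a ∧ ∀ c ∈ C, c a ≤ α := by
  have : LocallyConvexSpace ℝ (WeakDual ℝ X) :=
    WeakBilin.locallyConvexSpace (B := topDualPairing ℝ X)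
  have hconv : Convex ℝ (closure (StrongDual.toWeakDual '' C)) :=
    (hC.linear_image (StrongDual.toWeakDual (𝕜 := ℝ) (E := X)).toLinearMap).closure
  obtain ⟨g, u, hgy, hgC⟩ := geometric_hahn_banach_point_closed hconv isClosed_closure
    (x := StrongDual.toWeakDual y) hy
  obtain ⟨a, hga⟩ := WeakDual.exists_eval_of_continuousLinearMap g
  refine ⟨-a, -u, ?_, fun c hc => ?_⟩
  · rw [hga] at hgy
    simpa using hgy
  · have hc' := hgC _ (subset_closure ⟨c, hc, rfl⟩)
    rw [hga] at hc'
    simpa using hc'.le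

theorem Jop_add_smul_le {h : X × StrongDual ℝ X → EReal} {a : X} {α : ℝ}
    (hα : ∀ z ∈ edom h, z.2 a ≤ α) (x : X) (y : StrongDual ℝ X) {t : ℝ} (ht : 0 ≤ t) :
    Jop X h (x + t • a, y) ≤ Jop X h (x, y) + ((t * α : ℝ) : EReal) := by
  refine iSup_le fun z => ?_
  by_cases hz : h z = ⊤
  · simp [hz]
  have hshift : (((y z.1 + z.2 (x + t • a) : ℝ) : EReal) - h z)
      = (((y z.1 + z.2 x : ℝ) : EReal) - h z) + ((t * z.2 a : ℝ) : EReal) := by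
    rw [map_add, map_smul, smul_eq_mul, ← add_assoc, EReal.coe_add, sub_eq_add_neg,
      sub_eq_add_neg, add_right_comm]
  rw [dual_def]
  rw [hshift]
  gcongr
  · exact le_iSup (fun z : X × StrongDual ℝ X =>
      (((y z.1 + (inclusionInDoubleDual ℝ X x) z.2 : ℝ) : EReal) - h z)) z
  · exact hα z (lt_top_iff_ne_top.mpr hz)

theorem apply_le_of_mem_edom_Jop {h : X × StrongDual ℝ X → EReal}
    (hJ : ∀ z, pairE X z ≤ Jop X h z) {x : X} {y : StrongDual ℝ X}
    (hxy : (x, y) ∈ edom (Jop X h)) {a : X} {α : ℝ} (hα : ∀ z ∈ edom h, z.2 a ≤ α) :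
    y a ≤ α := by
  have hne_bot : Jop X h (x, y) ≠ ⊥ := ne_bot_of_le_ne_bot (EReal.coe_ne_bot _) (hJ (x, y))
  obtain ⟨m, hm⟩ : ∃ m : ℝ, Jop X h (x, y) = m :=
    ⟨_, (EReal.coe_toReal hxy.ne hne_bot).symm⟩
  have hlinear : ∀ t : ℝ, 0 ≤ t → t * (y a - α) ≤ m - y x := by
    intro t ht
    have := (hJ (x + t • a, y)).trans (Jop_add_smul_le hα x y ht)
    rw [hm, pairE, ← EReal.coe_add, EReal.coe_le_coe_iff, map_add, map_smul, smul_eq_mul] at this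
    linarith
  by_contra! hlt
  have hd : 0 < y a - α := sub_pos.mpr hlt
  have := hlinear ((|m - y x| + 1) / (y a - α)) (by positivity)
  rw [div_mul_cancel₀ _ hd.ne'] at this
  linarith [le_abs_self (m - y x)]

end

theorem statement2_general (X : Type*) [NormedAddCommGroup X] [NormedSpace ℝ X]
    (h : X × StrongDual ℝ X → EReal) (hJ : ∀ z, pairE X z ≤ Jop X h z) :
    Prod.snd '' edom (Jop X h) =
      {y : StrongDual ℝ X | ∃ x : X, (y, inclusionInDoubleDual ℝ X x) ∈ edom (conj2 X h)} ∧
    Prod.snd '' edom (Jop X h) ⊆ wcl X (convexHull ℝ (Prod.snd '' edom h)) := by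
  refine ⟨?_, ?_⟩
  · ext y
    exact ⟨fun ⟨⟨x, _⟩, hxy, hy⟩ => ⟨x, hy ▸ hxy⟩, fun ⟨x, hxy⟩ => ⟨(x, y), hxy, rfl⟩⟩
  · rintro y ⟨⟨x, y⟩, hxy, rfl⟩
    by_contra hy
    obtain ⟨a, α, hya, hα⟩ := exists_lt_eval_of_notMem_wcl (convex_convexHull ℝ _) hy
    have hdom : ∀ z ∈ edom h, z.2 a ≤ α :=
      fun z hz => hα _ (subset_convexHull ℝ _ ⟨z, hz, rfl⟩)
    exact (apply_le_of_mem_edom_Jop hJ hxy hdom).not_gt hya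

theorem statement2 (X : Type*) [NormedAddCommGroup X] [NormedSpace ℝ X] [CompleteSpace X]
    (h : X × StrongDual ℝ X → EReal) (hJ : ∀ z, pairE X z ≤ Jop X h z) :
    Prod.snd '' edom (Jop X h) =
      {y : StrongDual ℝ X | ∃ x : X, (y, inclusionInDoubleDual ℝ X x) ∈ edom (conj2 X h)} ∧
    Prod.snd '' edom (Jop X h) ⊆ wcl X (convexHull ℝ (Prod.snd '' edom h)) :=
  statement2_general X h hJ
end

section
/- Let h : X × X* → ℝ ∪ {±∞} be convex and satisfy h(x,x*) ≥ ⟨x,x*⟩ for all (x,x*) ∈ X × X*. Then P₂(D(h)) is contained in the weak-* closure in X* of P₁(D(h*)), and P₁(D(h)) (viewed inside X** via the canonical embedding) is contained in the weak-* closure in X** of P₂(D(h*)). -/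
open NormedSpace Classical

/-! Fix `(x₀, u₀)` with `h (x₀, u₀) < ⊤`, put `a = h (x₀, u₀) - ⟨x₀, u₀⟩ ≥ 0`, and let `α β > 0`
with `α β = 1`. Since `|⟨x - x₀, u - u₀⟩| ≤ α/2 ‖x - x₀‖² + β/2 ‖u - u₀‖²`, the concave function
`k (x, u) = ⟨x, u₀⟩ + ⟨x₀, u⟩ - ⟨x₀, u₀⟩ - α/2 ‖x - x₀‖² - β/2 ‖u - u₀‖²` lies below the duality
product, hence below `h`. Separating the open strict hypograph of `k` from the epigraph of `h` gives
a continuous affine function `(x, u) ↦ ⟨x, y*⟩ + ⟨y**, u⟩ + c` squeezed between them. Lying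
below `h` puts `(y*, y**)` in the domain of `h*`; lying above `k` and below `h` at `(x₀, u₀)` forces
`‖y* - u₀‖² ≤ 2 a α` and `‖y** - x₀‖² ≤ 2 a β`. Letting `α → 0` (resp. `β → 0`) gives norm
approximations, and norm closures lie in weak-* closures. -/

open Set

theorem sq_le_of_forall_mul_le {a c r β : ℝ} (hc : 0 < c) (hr : 0 < r)
    (H : ∀ t : ℝ, t * β ≤ a + c / 2 * t ^ 2 * r ^ 2) : β ^ 2 ≤ 2 * a * c * r ^ 2 := by
  have := H (β / (c * r ^ 2))
  field_simp at this
  nlinarith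

theorem ContinuousLinearMap.norm_sq_le_of_le_add_sq {E : Type*} [SeminormedAddCommGroup E]
    [NormedSpace ℝ E] (ψ : StrongDual ℝ E) {a c : ℝ} (hc : 0 < c)
    (H : ∀ v, ψ v ≤ a + c / 2 * ‖v‖ ^ 2) : ‖ψ‖ ^ 2 ≤ 2 * a * c := by
  have ha : 0 ≤ a := by simpa using H 0
  have hψ : ‖ψ‖ ≤ √(2 * a * c) := ψ.opNorm_le_bound' (by positivity) fun v hv => by
    rw [Real.norm_eq_abs, ← Real.sqrt_sq (norm_nonneg v), ← Real.sqrt_mul (by positivity)]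
    refine Real.abs_le_sqrt (sq_le_of_forall_mul_le hc ((norm_nonneg v).lt_of_ne' hv) fun t => ?_)
    simpa [norm_smul, mul_pow, mul_assoc] using H (t • v)
  calc ‖ψ‖ ^ 2 ≤ √(2 * a * c) ^ 2 := pow_le_pow_left₀ (norm_nonneg ψ) hψ 2
    _ = 2 * a * c := Real.sq_sqrt (by positivity)

theorem convexOn_univ_norm_sub_sq {E : Type*} [SeminormedAddCommGroup E] [NormedSpace ℝ E]
    (x₀ : E) : ConvexOn ℝ univ fun x => ‖x - x₀‖ ^ 2 := by
  have := (convexOn_univ_dist x₀).pow (fun _ _ => dist_nonneg) 2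
  simp only [dist_eq_norm] at this
  exact this

theorem mem_closure_of_forall_norm_sub_sq_le {E : Type*} [SeminormedAddCommGroup E] {s : Set E}
    {x : E} (C : ℝ) (h : ∀ α > 0, ∃ y ∈ s, ‖y - x‖ ^ 2 ≤ C * α) : x ∈ closure s := by
  refine Metric.mem_closure_iff.2 fun δ hδ => ?_
  obtain ⟨y, hy, hyx⟩ := h (δ ^ 2 / (|C| + 1)) (by positivity)
  refine ⟨y, hy, ?_⟩
  rw [dist_comm, dist_eq_norm]
  refine lt_of_pow_lt_pow_left₀ 2 hδ.le (hyx.trans_lt ?_)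
  rw [mul_div_assoc', div_lt_iff₀ (by positivity)]
  nlinarith [le_abs_self C, pow_pos hδ 2]

section Sandwich

variable {E : Type*} [AddCommGroup E] [Module ℝ E]

theorem ErConvex.convex_epigraph {g : E → EReal} (hg : ErConvex g) :
    Convex ℝ {p : E × ℝ | g p.1 ≤ p.2} := by
  intro p hp r hr a b ha hb hab
  calc g (a • p + b • r).1 = g (a • p.1 + b • r.1) := rfl
    _ ≤ a * g p.1 + b * g r.1 := hg _ _ a b ha hb hab
    _ ≤ a * p.2 + b * r.2 :=
      add_le_add (mul_le_mul_of_nonneg_left hp (EReal.coe_nonneg.2 ha))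
        (mul_le_mul_of_nonneg_left hr (EReal.coe_nonneg.2 hb))
    _ = ((a • p + b • r).2 : ℝ) := by simp

variable [TopologicalSpace E] [IsTopologicalAddGroup E] [ContinuousSMul ℝ E]

theorem ErConvex.exists_affine_between {g : E → EReal} (hg : ErConvex g) {k : E → ℝ}
    (hk : ConcaveOn ℝ univ k) (hkc : Continuous k) (hkg : ∀ z, (k z : EReal) ≤ g z)
    {z₀ : E} (hz₀ : g z₀ < ⊤) :
    ∃ (φ : StrongDual ℝ E) (c : ℝ), ∀ z, k z ≤ φ z + c ∧ ((φ z + c : ℝ) : EReal) ≤ g z := by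
  have hS : Convex ℝ {p : E × ℝ | p.2 < k p.1} := by
    simpa using hk.convex_strict_hypograph
  have hSo : IsOpen {p : E × ℝ | p.2 < k p.1} := isOpen_lt continuous_snd (hkc.comp continuous_fst)
  have hST : Disjoint {p : E × ℝ | p.2 < k p.1} {p : E × ℝ | g p.1 ≤ p.2} :=
    Set.disjoint_left.2 fun p hpS hpT =>
      (((EReal.coe_lt_coe_iff.2 hpS).trans_le (hkg p.1)).trans_le hpT).false
  obtain ⟨f, u, hfS, hfT⟩ := geometric_hahn_banach_open hS hSo hg.convex_epigraph hST
  set s := f (0, 1)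
  have hf : ∀ z t, f (z, t) = f (z, 0) + t * s := fun z t => by
    rw [← smul_eq_mul, ← map_smul, ← map_add]; simp
  have hfS' : ∀ z t, t < k z → f (z, 0) + t * s < u := fun z t ht => hf z t ▸ hfS (z, t) ht
  have hfT' : ∀ z (t : ℝ), g z ≤ t → u ≤ f (z, 0) + t * s := fun z t ht => hf z t ▸ hfT (z, t) ht
  have hfin : ∀ z, g z ≠ ⊤ → ∃ t : ℝ, g z = t := fun z hz =>
    ⟨(g z).toReal, (EReal.coe_toReal hz ((EReal.bot_lt_coe _).trans_le (hkg z)).ne').symm⟩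
  -- the separating hyperplane is not vertical above the point `z₀` of the domain of `g`
  have hs : 0 < s := by
    obtain ⟨t₀, ht₀⟩ := hfin z₀ hz₀.ne
    have h1 := hfT' z₀ t₀ ht₀.le
    have h2 := hfS' z₀ (min (k z₀) t₀ - 1) (by linarith [min_le_left (k z₀) t₀])
    nlinarith [min_le_right (k z₀) t₀]
  set φ : StrongDual ℝ E := -s⁻¹ • f.comp (ContinuousLinearMap.inl ℝ E ℝ)
  have hφ : ∀ z, φ z + u / s = (u - f (z, 0)) / s := fun z => by
    simp only [φ, smul_apply, ContinuousLinearMap.comp_apply,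
      ContinuousLinearMap.inl_apply, smul_eq_mul]
    field_simp
    ring
  refine ⟨φ, u / s, fun z => ⟨le_of_forall_lt fun t ht => ?_, ?_⟩⟩
  · rw [hφ, lt_div_iff₀ hs]
    linarith [hfS' z t ht]
  · rcases eq_or_ne (g z) ⊤ with hz | hz
    · simp [hz]
    obtain ⟨t, ht⟩ := hfin z hz
    rw [ht, EReal.coe_le_coe_iff, hφ, div_le_iff₀ hs]
    linarith [hfT' z t ht.le]

end Sandwich

section Dual

variable {X : Type*} [NormedAddCommGroup X] [NormedSpace ℝ X]

theorem StrongDual.linearization_sub_sq_le_apply (x x₀ : X) (u u₀ : StrongDual ℝ X) {α β : ℝ}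
    (hα : 0 < α) (hαβ : α * β = 1) :
    u₀ x + u x₀ - u₀ x₀ - (α / 2 * ‖x - x₀‖ ^ 2 + β / 2 * ‖u - u₀‖ ^ 2) ≤ u x := by
  have h1 : -(‖u - u₀‖ * ‖x - x₀‖) ≤ (u - u₀) (x - x₀) :=
    neg_le_of_abs_le ((u - u₀).le_opNorm (x - x₀))
  have h2 : (u - u₀) (x - x₀) = u x - u₀ x - u x₀ + u₀ x₀ := by
    simp only [sub_apply, map_sub]; ring
  nlinarith [sq_nonneg (α * ‖x - x₀‖ - ‖u - u₀‖)]

theorem closure_subset_wcl (S : Set (StrongDual ℝ X)) : closure S ⊆ wcl X S := fun _ hy =>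
  image_closure_subset_closure_image NormedSpace.Dual.toWeakDual_continuous ⟨_, hy, rfl⟩

theorem conj2_le_of_affine_le {h : X × StrongDual ℝ X → EReal}
    (p : StrongDual ℝ X × StrongDual ℝ (StrongDual ℝ X)) (c : ℝ)
    (hp : ∀ z, ((p.1 z.1 + p.2 z.2 + c : ℝ) : EReal) ≤ h z) :
    conj2 X h p ≤ ((-c : ℝ) : EReal) :=
  iSup_le fun z => EReal.sub_le_of_le_add <|
    calc ((p.1 z.1 + p.2 z.2 : ℝ) : EReal)
        = ((-c : ℝ) : EReal) + ((p.1 z.1 + p.2 z.2 + c : ℝ)) := by rw [← EReal.coe_add]; ring_nf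
      _ ≤ ((-c : ℝ) : EReal) + h z := add_le_add le_rfl (hp z)

theorem exists_mem_edom_conj2_norm_sub_sq_le {h : X × StrongDual ℝ X → EReal} (hconv : ErConvex h)
    (hge : ∀ z, pairE X z ≤ h z) {x₀ : X} {u₀ : StrongDual ℝ X} (hz₀ : h (x₀, u₀) < ⊤)
    {α β : ℝ} (hα : 0 < α) (hβ : 0 < β) (hαβ : α * β = 1) :
    ∃ p ∈ edom (conj2 X h), ‖p.1 - u₀‖ ^ 2 ≤ 2 * ((h (x₀, u₀)).toReal - u₀ x₀) * α ∧
      ‖p.2 - inclusionInDoubleDual ℝ X x₀‖ ^ 2 ≤ 2 * ((h (x₀, u₀)).toReal - u₀ x₀) * β := by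
  set k : X × StrongDual ℝ X → ℝ := fun z =>
    u₀ z.1 + z.2 x₀ - u₀ x₀ - (α / 2 * ‖z.1 - x₀‖ ^ 2 + β / 2 * ‖z.2 - u₀‖ ^ 2)
  have hk : ConcaveOn ℝ univ k := by
    have hq := (((convexOn_univ_norm_sub_sq x₀).comp_linearMap (LinearMap.fst ℝ X _)).smul
      (by positivity : 0 ≤ α / 2)).add
      (((convexOn_univ_norm_sub_sq u₀).comp_linearMap (LinearMap.snd ℝ X _)).smul
      (by positivity : 0 ≤ β / 2))
    have hL := LinearMap.concaveOn
      ((u₀ : X →ₗ[ℝ] ℝ).coprod (inclusionInDoubleDual ℝ X x₀ : StrongDual ℝ X →ₗ[ℝ] ℝ))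
      convex_univ
    exact (hL.add_const (-u₀ x₀)).sub hq
  have hkh : ∀ z, (k z : EReal) ≤ h z := fun z =>
    (EReal.coe_le_coe_iff.2
      (StrongDual.linearization_sub_sq_le_apply z.1 x₀ z.2 u₀ hα hαβ)).trans (hge z)
  obtain ⟨φ, c, hφ⟩ := hconv.exists_affine_between hk (by fun_prop) hkh hz₀
  set p : StrongDual ℝ X × StrongDual ℝ (StrongDual ℝ X) :=
    (φ.comp (ContinuousLinearMap.inl ℝ X _), φ.comp (ContinuousLinearMap.inr ℝ X _))
  have hφp : ∀ z, φ z = p.1 z.1 + p.2 z.2 := fun z => by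
    simp [p, ← map_add]
  set a := (h (x₀, u₀)).toReal - u₀ x₀
  have hφz₀ : p.1 x₀ + p.2 u₀ + c ≤ a + u₀ x₀ := by
    have := (hφ (x₀, u₀)).2
    rw [← EReal.coe_toReal hz₀.ne ((EReal.bot_lt_coe _).trans_le (hkh _)).ne', EReal.coe_le_coe_iff,
      hφp] at this
    linarith
  refine ⟨p, ?_, ?_, ?_⟩
  · exact (conj2_le_of_affine_le p c fun z => hφp z ▸ (hφ z).2).trans_lt (EReal.coe_lt_top _)
  · rw [norm_sub_rev]
    refine (u₀ - p.1).norm_sq_le_of_le_add_sq hα fun v => ?_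
    have hv := (hφ (x₀ + v, u₀)).1
    simp only [k, hφp, map_add, add_sub_cancel_left, sub_self, norm_zero] at hv
    simp only [sub_apply]
    linarith
  · rw [norm_sub_rev p.2]
    refine (inclusionInDoubleDual ℝ X x₀ - p.2).norm_sq_le_of_le_add_sq hβ fun v => ?_
    have hv := (hφ (x₀, u₀ + v)).1
    simp only [k, hφp, map_add, add_apply, add_sub_cancel_left, sub_self, norm_zero] at hv
    simp only [sub_apply, dual_def]
    linarith

end Dual

theorem statement4_general (X : Type*) [NormedAddCommGroup X] [NormedSpace ℝ X]
    (h : X × StrongDual ℝ X → EReal) (hconv : ErConvex h) (hge : ∀ z, pairE X z ≤ h z) :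
    Prod.snd '' edom h ⊆ wcl X (Prod.fst '' edom (conj2 X h)) ∧
    (inclusionInDoubleDual ℝ X) '' (Prod.fst '' edom h) ⊆
      wcl (StrongDual ℝ X) (Prod.snd '' edom (conj2 X h)) := by
  refine ⟨?_, ?_⟩
  · rintro _ ⟨⟨x₀, u₀⟩, hz₀, rfl⟩
    refine closure_subset_wcl _ (mem_closure_of_forall_norm_sub_sq_le
      (2 * ((h (x₀, u₀)).toReal - u₀ x₀)) fun α hα => ?_)
    obtain ⟨p, hp, hp₁, -⟩ := exists_mem_edom_conj2_norm_sub_sq_le hconv hge hz₀ hα (inv_pos.2 hα)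
      (mul_inv_cancel₀ hα.ne')
    exact ⟨p.1, ⟨p, hp, rfl⟩, hp₁⟩
  · rintro _ ⟨_, ⟨⟨x₀, u₀⟩, hz₀, rfl⟩, rfl⟩
    refine closure_subset_wcl _ (mem_closure_of_forall_norm_sub_sq_le
      (2 * ((h (x₀, u₀)).toReal - u₀ x₀)) fun α hα => ?_)
    obtain ⟨p, hp, -, hp₂⟩ := exists_mem_edom_conj2_norm_sub_sq_le hconv hge hz₀ (inv_pos.2 hα) hα
      (inv_mul_cancel₀ hα.ne')
    exact ⟨p.2, ⟨p, hp, rfl⟩, hp₂⟩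

theorem statement4 (X : Type*) [NormedAddCommGroup X] [NormedSpace ℝ X] [CompleteSpace X]
    (h : X × StrongDual ℝ X → EReal) (hconv : ErConvex h) (hge : ∀ z, pairE X z ≤ h z) :
    Prod.snd '' edom h ⊆ wcl X (Prod.fst '' edom (conj2 X h)) ∧
    (inclusionInDoubleDual ℝ X) '' (Prod.fst '' edom h) ⊆
      wcl (StrongDual ℝ X) (Prod.snd '' edom (conj2 X h)) :=
  statement4_general X h hconv hge
end

section
/- Let h : X × X* → ℝ ∪ {+∞} be a proper, closed (norm-lower-semicontinuous) convex function and 0 ≤ L < ∞. If P₁(D(h*)) ⊆ B_{X*}[L], then h(x, x*) ≤ h(z, x*) + L‖x − z‖ for all x, z ∈ X and all x* ∈ X*, and consequently D(h) = X × P₂(D(h)). -/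
open NormedSpace Classical

/-!
A proper closed convex `h` is the supremum of its continuous affine minorants
`(x, x*) ↦ ⟨x, y*⟩ + ⟨y**, x*⟩ - c` (Hahn–Banach in `X × X* × ℝ`). Every such minorant has
`(y*, y**) ∈ D(h*)`, hence `‖y*‖ ≤ L`, and comparing it at `(x, x*)` and `(z, x*)` gives
`r < h(z, x*) + L‖x - z‖` for every `r < h(x, x*)`. The right-hand side is finite as soon as
`(z, x*) ∈ D(h)`, which gives the description of `D(h)`.
-/

open Set ContinuousLinearMap

section AffineMinorant

variable {E : Type*} {f : E → EReal}

def realEpigraph (f : E → EReal) : Set (E × ℝ) := {p | f p.1 ≤ p.2}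

theorem ErConvex.convex_realEpigraph [AddCommGroup E] [Module ℝ E] (hf : ErConvex f) :
    Convex ℝ (realEpigraph f) := by
  rintro ⟨x, s⟩ hx ⟨y, t⟩ hy a b ha hb hab
  change f (a • x + b • y) ≤ ((a * s + b * t : ℝ) : EReal)
  calc f (a • x + b • y) ≤ a * f x + b * f y := hf x y a b ha hb hab
    _ ≤ a * s + b * t := by
      gcongr
      exacts [hx, hy]
    _ = ((a * s + b * t : ℝ) : EReal) := by norm_cast

theorem LowerSemicontinuous.isClosed_realEpigraph [TopologicalSpace E]
    (hf : LowerSemicontinuous f) : IsClosed (realEpigraph f) :=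
  hf.isClosed_epigraph.preimage
    (continuous_fst.prodMk (continuous_coe_real_ereal.comp continuous_snd))

variable [AddCommGroup E] [Module ℝ E] [TopologicalSpace E]

def IsAffineMinorant (f : E → EReal) (y : StrongDual ℝ E) (c : ℝ) : Prop :=
  ∀ e, ((y e - c : ℝ) : EReal) ≤ f e

theorem exists_isAffineMinorant_of_separation {y : StrongDual ℝ E} {s u : ℝ} (hs : s < 0)
    (hsep : ∀ e (t : ℝ), f e ≤ t → y e + s * t < u) {w : E} {r : ℝ} (hu : u < y w + s * r) :
    ∃ (y' : StrongDual ℝ E) (c : ℝ), IsAffineMinorant f y' c ∧ r < y' w - c := by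
  have hN : 0 < -s := neg_pos.2 hs
  refine ⟨(-s)⁻¹ • y, (-s)⁻¹ * u, fun e => EReal.le_of_forall_lt_iff_le.1 fun t ht => ?_, ?_⟩
  · have hlt := hsep e t ht.le
    simp only [smul_apply, smul_eq_mul]
    rw [EReal.coe_le_coe_iff, ← mul_sub, inv_mul_le_iff₀ hN]
    linarith
  · simp only [smul_apply, smul_eq_mul]
    rw [← mul_sub, lt_inv_mul_iff₀ hN]
    linarith

theorem IsAffineMinorant.add_smul {y₀ : StrongDual ℝ E} {c₀ : ℝ} (h₀ : IsAffineMinorant f y₀ c₀)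
    {y : StrongDual ℝ E} {u : ℝ} (hy : ∀ e, f e ≠ ⊤ → y e ≤ u) {a : ℝ} (ha : 0 ≤ a) :
    IsAffineMinorant f (y₀ + a • y) (c₀ + a * u) := by
  intro e
  by_cases he : f e = ⊤
  · simp [he]
  refine le_trans (EReal.coe_le_coe_iff.2 ?_) (h₀ e)
  simp only [add_apply, smul_apply, smul_eq_mul]
  nlinarith [mul_le_mul_of_nonneg_left (hy e he) ha]

variable [IsTopologicalAddGroup E] [ContinuousSMul ℝ E] [LocallyConvexSpace ℝ E]

theorem exists_separation_realEpigraph (hconv : ErConvex f)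
    (hlsc : LowerSemicontinuous f) {w : E} {r : ℝ} (hr : r < f w) :
    ∃ (y : StrongDual ℝ E) (s u : ℝ),
      (∀ e (t : ℝ), f e ≤ t → y e + s * t < u) ∧ u < y w + s * r := by
  obtain ⟨g, u, hg, hu⟩ := geometric_hahn_banach_closed_point hconv.convex_realEpigraph
    hlsc.isClosed_realEpigraph (show (w, r) ∉ realEpigraph f from not_le.2 hr)
  have hsplit : ∀ e (t : ℝ), g (e, t) = g.comp (inl ℝ E ℝ) e + g (0, 1) * t := by
    intro e t
    have hdecomp : (e, t) = (e, 0) + t • ((0 : E), (1 : ℝ)) := by simp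
    rw [hdecomp, map_add, map_smul, smul_eq_mul, mul_comm]
    rfl
  exact ⟨g.comp (inl ℝ E ℝ), g (0, 1), u, fun e t het => hsplit e t ▸ hg (e, t) het,
    hsplit w r ▸ hu⟩

theorem exists_isAffineMinorant_lt_of_ne_top (hconv : ErConvex f)
    (hlsc : LowerSemicontinuous f) {w : E} {r : ℝ} (hr : r < f w) (hw : f w ≠ ⊤) :
    ∃ (y : StrongDual ℝ E) (c : ℝ), IsAffineMinorant f y c ∧ r < y w - c := by
  obtain ⟨y, s, u, hsep, hu⟩ := exists_separation_realEpigraph hconv hlsc hr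
  obtain ⟨t, hwt⟩ : ∃ t : ℝ, f w ≤ t := ⟨(f w).toReal, EReal.le_coe_toReal hw⟩
  have hrt : r < t := EReal.coe_lt_coe_iff.1 (hr.trans_le hwt)
  have hs : s < 0 := by nlinarith [hsep w t hwt]
  exact exists_isAffineMinorant_of_separation hs hsep hu

theorem exists_isAffineMinorant_lt (hconv : ErConvex f) (hlsc : LowerSemicontinuous f)
    {e₀ : E} {t₀ : ℝ} (he₀ : f e₀ = t₀) {w : E} {r : ℝ} (hr : r < f w) :
    ∃ (y : StrongDual ℝ E) (c : ℝ), IsAffineMinorant f y c ∧ r < y w - c := by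
  obtain ⟨y, s, u, hsep, hu⟩ := exists_separation_realEpigraph hconv hlsc hr
  rcases lt_trichotomy s 0 with hs | rfl | hs
  · exact exists_isAffineMinorant_of_separation hs hsep hu
  · -- The separating hyperplane is vertical: tilt an affine minorant through `e₀` by it.
    obtain ⟨y₀, c₀, h₀, -⟩ := exists_isAffineMinorant_lt_of_ne_top hconv hlsc (r := t₀ - 1)
      (by rw [he₀]; exact_mod_cast sub_one_lt t₀) (by simp [he₀])
    have hyu : ∀ e, f e ≠ ⊤ → y e ≤ u := fun e he => by
      simpa using (hsep e _ (EReal.le_coe_toReal he)).le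
    have hgap : 0 < y w - u := by simpa using hu
    set a := (|r - (y₀ w - c₀)| + 1) / (y w - u)
    have ha : a * (y w - u) = |r - (y₀ w - c₀)| + 1 := div_mul_cancel₀ _ hgap.ne'
    refine ⟨y₀ + a • y, c₀ + a * u, h₀.add_smul hyu (by positivity), ?_⟩
    simp only [add_apply, smul_apply, smul_eq_mul]
    nlinarith [le_abs_self (r - (y₀ w - c₀))]
  · have hsep₀ := hsep e₀ (max t₀ ((u - y e₀) / s))
      (he₀ ▸ EReal.coe_le_coe_iff.2 (le_max_left _ _))
    have hlarge := le_max_right t₀ ((u - y e₀) / s)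
    rw [div_le_iff₀ hs] at hlarge
    linarith

end AffineMinorant

theorem edom_eq_univ_prod_of_le_add {α β : Type*} {h : α × β → EReal} (C : α → α → ℝ)
    (hC : ∀ x z y, h (x, y) ≤ h (z, y) + C x z) : edom h = univ ×ˢ (Prod.snd '' edom h) := by
  ext ⟨x, y⟩
  refine ⟨fun hxy => ⟨mem_univ x, (x, y), hxy, rfl⟩, ?_⟩
  rintro ⟨-, ⟨z, y'⟩, hz, rfl⟩
  exact (hC x z y').trans_lt (EReal.add_lt_top hz.ne (EReal.coe_ne_top _))

section Conjugate

variable {X : Type*} [NormedAddCommGroup X] [NormedSpace ℝ X] {h : X × StrongDual ℝ X → EReal}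

theorem conj2_le_of_isAffineMinorant {y : StrongDual ℝ (X × StrongDual ℝ X)} {c : ℝ}
    (hy : IsAffineMinorant h y c) :
    conj2 X h (y.comp (inl ℝ _ _), y.comp (inr ℝ _ _)) ≤ c := by
  refine iSup_le fun z => ?_
  have hz : y.comp (inl ℝ _ _) z.1 + y.comp (inr ℝ _ _) z.2 = y z := by
    rw [comp_apply, comp_apply, ← map_add]
    simp
  rw [hz, EReal.sub_le_iff_le_add (Or.inr (EReal.coe_ne_top c)) (Or.inr (EReal.coe_ne_bot c))]
  calc ((y z : ℝ) : EReal) = c + ((y z - c : ℝ) : EReal) := by norm_cast; ring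
    _ ≤ c + h z := by gcongr; exact hy z

theorem le_add_mul_norm_sub_of_fst_image_edom_conj2_subset (hne_bot : ∀ z, h z ≠ ⊥)
    (hlsc : LowerSemicontinuous h) (hconv : ErConvex h) {L : ℝ}
    (hdom : Prod.fst '' edom (conj2 X h) ⊆ Metric.closedBall 0 L) (x z : X)
    (xs : StrongDual ℝ X) : h (x, xs) ≤ h (z, xs) + ((L * ‖x - z‖ : ℝ) : EReal) := by
  by_cases hz : h (z, xs) = ⊤
  · rw [hz, EReal.top_add_coe]
    exact le_top
  obtain ⟨t₀, ht₀⟩ : ∃ t₀ : ℝ, h (z, xs) = t₀ := ⟨_, (EReal.coe_toReal hz (hne_bot _)).symm⟩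
  rw [ht₀, ← EReal.coe_add]
  refine EReal.ge_of_forall_gt_iff_ge.1 fun r hr => ?_
  obtain ⟨y, c, hyc, hrc⟩ := exists_isAffineMinorant_lt hconv hlsc ht₀ hr
  set y₁ := y.comp (inl ℝ X (StrongDual ℝ X))
  have hy₁ : ‖y₁‖ ≤ L := by
    have hmem : (y₁, y.comp (inr ℝ _ _)) ∈ edom (conj2 X h) :=
      (conj2_le_of_isAffineMinorant hyc).trans_lt (EReal.coe_lt_top c)
    simpa using hdom (mem_image_of_mem Prod.fst hmem)
  have hshift : y (x, xs) = y₁ (x - z) + y (z, xs) := by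
    have hsplit : (x, xs) = (x - z, 0) + (z, xs) := by simp
    rw [hsplit, map_add]
    rfl
  have hz' : y (z, xs) - c ≤ t₀ := by exact_mod_cast ht₀ ▸ hyc (z, xs)
  have hlip : y₁ (x - z) ≤ L * ‖x - z‖ := (le_abs_self _).trans (y₁.le_of_opNorm_le hy₁ _)
  exact_mod_cast (by linarith : r ≤ t₀ + L * ‖x - z‖)

end Conjugate

theorem statement7_general (X : Type*) [NormedAddCommGroup X] [NormedSpace ℝ X]
    (h : X × StrongDual ℝ X → EReal) (hne_bot : ∀ z, h z ≠ ⊥)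
    (hlsc : LowerSemicontinuous h) (hconv : ErConvex h) (L : ℝ)
    (hdom : Prod.fst '' edom (conj2 X h) ⊆ Metric.closedBall 0 L) :
    (∀ (x z : X) (xs : StrongDual ℝ X), h (x, xs) ≤ h (z, xs) + ((L * ‖x - z‖ : ℝ) : EReal)) ∧
    edom h = (Set.univ : Set X) ×ˢ (Prod.snd '' edom h) := by
  have hlip := le_add_mul_norm_sub_of_fst_image_edom_conj2_subset hne_bot hlsc hconv hdom
  exact ⟨hlip, edom_eq_univ_prod_of_le_add _ hlip⟩

theorem statement7 (X : Type*) [NormedAddCommGroup X] [NormedSpace ℝ X] [CompleteSpace X]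
    (h : X × StrongDual ℝ X → EReal) (hne_bot : ∀ z, h z ≠ ⊥) (hne_top : ∃ z, h z ≠ ⊤)
    (hlsc : LowerSemicontinuous h) (hconv : ErConvex h) (L : ℝ) (hL : 0 ≤ L)
    (hdom : Prod.fst '' edom (conj2 X h) ⊆ Metric.closedBall 0 L) :
    (∀ (x z : X) (xs : StrongDual ℝ X), h (x, xs) ≤ h (z, xs) + ((L * ‖x - z‖ : ℝ) : EReal)) ∧
    edom h = (Set.univ : Set X) ×ˢ (Prod.snd '' edom h) :=
  statement7_general X h hne_bot hlsc hconv L hdom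
end

section
/- Let T : X ⇉ X* be a maximal monotone operator. For every h in the Fitzpatrick family F_T, the norm closure of P₁(D(h)) equals the norm closure of the convex hull of D(T), and the weak-* closure of P₂(D(h)) equals the weak-* closure of the convex hull of R(T). -/
open NormedSpace Classical

/-!
If `h` is in the Fitzpatrick family and `h z = r < ⊤`, convexity of `h` along the segment from
`z` to `w ∈ T`, together with `h ≥ ⟨·,·⟩` and `h = ⟨·,·⟩` on `T`, gives the Fitzpatrick bound
`⟨z.1, w.2⟩ + ⟨w.1, z.2⟩ - ⟨w.1, w.2⟩ ≤ r` for all `w ∈ T`.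
Let `d = (u, u*)` with `⟨u, u*⟩ ≥ 0`. If the functional `w ↦ ⟨w.1, u*⟩ + ⟨u, w.2⟩` is at most `α`
on `T` but exceeds `α` at `z`, then for `t` large the point `z + t d` is not in `T` and is still
monotonically related to every point of `T`, contradicting maximality. Separating `z.1` from
`conv D(T)` by `g ∈ X*` (take `d = (0, g)`), or `z.2` weak-* from `conv R(T)` by evaluation at
some `x ∈ X` (take `d = (x, 0)`), yields the nontrivial inclusions; the reverse ones hold because
`dom h` is convex and contains `T`.
-/

open Set

theorem ErConvex.convex_edom {E : Type*} [AddCommGroup E] [Module ℝ E] {f : E → EReal}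
    (hf : ErConvex f) : Convex ℝ (edom f) := by
  intro x hx y hy a b ha hb hab
  have mul_ne_top {c : ℝ} (hc : 0 ≤ c) {v : E} (hv : v ∈ edom f) : (c : EReal) * f v ≠ ⊤ :=
    (EReal.mul_ne_top _ _).2 ⟨.inl (EReal.coe_ne_bot c), .inl (EReal.coe_nonneg.2 hc),
      .inl (EReal.coe_ne_top c), .inr (ne_of_lt hv)⟩
  exact (hf x y a b ha hb hab).trans_lt (EReal.add_lt_top (mul_ne_top ha hx) (mul_ne_top hb hy))

section

variable {X : Type*} [NormedAddCommGroup X] [NormedSpace ℝ X]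

theorem fitzpatrick_le_of_erConvex {h : X × StrongDual ℝ X → EReal} (hconv : ErConvex h)
    (hmaj : ∀ z, pairE X z ≤ h z) {z w : X × StrongDual ℝ X} {r : ℝ} (hz : h z = r)
    (hw : h w = pairE X w) : z.2 w.1 + w.2 z.1 - w.2 w.1 ≤ r := by
  set A := z.2 w.1 + w.2 z.1 - w.2 w.1
  have hseg : ∀ t ∈ Ioo (0 : ℝ) 1, t * z.2 z.1 + (1 - t) * A ≤ r := by
    rintro t ⟨ht0, ht1⟩
    have hle := (hmaj _).trans (hconv z w t (1 - t) ht0.le (by linarith) (by ring))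
    rw [hz, hw, pairE, pairE, ← EReal.coe_mul, ← EReal.coe_mul, ← EReal.coe_add,
      EReal.coe_le_coe_iff] at hle
    simp only [Prod.fst_add, Prod.snd_add, Prod.smul_fst, Prod.smul_snd, map_add, map_smul,
      add_apply, smul_apply, smul_eq_mul] at hle
    have hscaled : t * (t * z.2 z.1 + (1 - t) * A) ≤ t * r := by nlinarith
    exact le_of_mul_le_mul_left hscaled ht0
  have hclosed : IsClosed {t : ℝ | t * z.2 z.1 + (1 - t) * A ≤ r} :=
    isClosed_le (by fun_prop) continuous_const
  have h0 : (0 : ℝ) ∈ closure (Ioo (0 : ℝ) 1) := by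
    rw [closure_Ioo zero_ne_one]
    exact left_mem_Icc.2 zero_le_one
  simpa using hclosed.closure_subset_iff.2 hseg h0

theorem MaxMonotone.exists_lt_zero_of_notMem {T : Set (X × StrongDual ℝ X)}
    (hT : MaxMonotone X T) {p : X × StrongDual ℝ X} (hp : p ∉ T) :
    ∃ w ∈ T, (p.2 - w.2) (p.1 - w.1) < 0 := by
  by_contra! hrel
  have hmono : MonotoneSet X (insert p T) := by
    have hsymm (u v : X × StrongDual ℝ X) :
        (u.2 - v.2) (u.1 - v.1) = (v.2 - u.2) (v.1 - u.1) := by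
      simp only [sub_apply, map_sub]
      ring
    rintro u (rfl | hu) v (rfl | hv)
    · simp
    · exact hrel v hv
    · exact hsymm u v ▸ hrel u hu
    · exact hT.1 u hu v hv
  exact hp (hT.2 _ hmono (subset_insert p T) ▸ mem_insert p T)

theorem MaxMonotone.le_of_fitzpatrick_le {T : Set (X × StrongDual ℝ X)} (hT : MaxMonotone X T)
    {z : X × StrongDual ℝ X} {r : ℝ} (hz : ∀ w ∈ T, z.2 w.1 + w.2 z.1 - w.2 w.1 ≤ r)
    {d : X × StrongDual ℝ X} (hd : 0 ≤ d.2 d.1) {α : ℝ}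
    (hα : ∀ w ∈ T, d.2 w.1 + w.2 d.1 ≤ α) : d.2 z.1 + z.2 d.1 ≤ α := by
  by_contra! hlt
  set δ := d.2 z.1 + z.2 d.1 - α
  have hδ : 0 < δ := sub_pos.2 hlt
  set t := (|r - z.2 z.1| + 1) / δ
  have ht : 0 ≤ t := by positivity
  have htδ : r - z.2 z.1 < t * δ := by
    rw [div_mul_cancel₀ _ hδ.ne']
    linarith [le_abs_self (r - z.2 z.1)]
  have htd : 0 ≤ t * t * d.2 d.1 := by positivity
  by_cases hp : z + t • d ∈ T
  · have hpα := hα _ hp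
    simp only [Prod.fst_add, Prod.snd_add, Prod.smul_fst, Prod.smul_snd, map_add, map_smul,
      add_apply, smul_apply, smul_eq_mul] at hpα
    nlinarith
  · obtain ⟨w, hw, hneg⟩ := hT.exists_lt_zero_of_notMem hp
    have hwα : t * (d.2 w.1 + w.2 d.1) ≤ t * α := mul_le_mul_of_nonneg_left (hα w hw) ht
    simp only [Prod.fst_add, Prod.snd_add, Prod.smul_fst, Prod.smul_snd, map_add, map_sub,
      map_smul, add_apply, sub_apply, smul_apply, smul_eq_mul] at hneg
    nlinarith [hz w hw]

theorem MaxMonotone.fst_mem_closure_convexHull {T : Set (X × StrongDual ℝ X)}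
    (hT : MaxMonotone X T) {z : X × StrongDual ℝ X} {r : ℝ}
    (hz : ∀ w ∈ T, z.2 w.1 + w.2 z.1 - w.2 w.1 ≤ r) :
    z.1 ∈ closure (convexHull ℝ (Prod.fst '' T)) := by
  by_contra hout
  obtain ⟨g, α, hlt, hgt⟩ :=
    geometric_hahn_banach_closed_point (convex_convexHull ℝ _).closure isClosed_closure hout
  have hTα (w) (hw : w ∈ T) : g w.1 + w.2 0 ≤ α := by
    simpa using (hlt _ (subset_closure (subset_convexHull ℝ _ ⟨w, hw, rfl⟩))).le
  have hzα := hT.le_of_fitzpatrick_le hz (d := (0, g)) (by simp) hTα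
  simp only [map_zero, add_zero] at hzα
  linarith

theorem MaxMonotone.snd_mem_wcl_convexHull {T : Set (X × StrongDual ℝ X)}
    (hT : MaxMonotone X T) {z : X × StrongDual ℝ X} {r : ℝ}
    (hz : ∀ w ∈ T, z.2 w.1 + w.2 z.1 - w.2 w.1 ≤ r) :
    z.2 ∈ wcl X (convexHull ℝ (Prod.snd '' T)) := by
  by_contra hout
  have hconv : Convex ℝ (StrongDual.toWeakDual '' convexHull ℝ (Prod.snd '' T)) :=
    (convex_convexHull ℝ _).linear_image StrongDual.toWeakDual.toLinearMap
  have : LocallyConvexSpace ℝ (WeakDual ℝ X) := WeakBilin.locallyConvexSpace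
  obtain ⟨F, α, hlt, hgt⟩ :=
    geometric_hahn_banach_closed_point hconv.closure isClosed_closure hout
  obtain ⟨x, rfl⟩ := LinearMap.dualEmbedding_surjective (topDualPairing ℝ X) F
  have hTα (w) (hw : w ∈ T) : w.2 x ≤ α :=
    (hlt _ (subset_closure ⟨w.2, subset_convexHull ℝ _ ⟨w, hw, rfl⟩, rfl⟩)).le
  have hzα := hT.le_of_fitzpatrick_le hz (d := (x, 0)) (by simp) (by simpa using hTα)
  simp only [zero_apply, zero_add] at hzα
  exact not_lt.2 hzα hgt

theorem wcl_mono {S C : Set (StrongDual ℝ X)} (h : S ⊆ C) : wcl X S ⊆ wcl X C :=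
  preimage_mono (closure_mono (image_mono h))

theorem wcl_minimal {S C : Set (StrongDual ℝ X)} (h : S ⊆ wcl X C) : wcl X S ⊆ wcl X C :=
  preimage_mono (closure_minimal (image_subset_iff.2 h) isClosed_closure)

end

theorem statement11_general (X : Type*) [NormedAddCommGroup X] [NormedSpace ℝ X]
    (T : Set (X × StrongDual ℝ X)) (hT : MaxMonotone X T) :
    ∀ h ∈ FitzFamily X T,
      closure (Prod.fst '' edom h) = closure (convexHull ℝ (Prod.fst '' T)) ∧
      wcl X (Prod.snd '' edom h) = wcl X (convexHull ℝ (Prod.snd '' T)) := by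
  rintro h ⟨hconv, -, hmaj, hT_eq⟩
  have hT_sub : T ⊆ edom h := fun w hw => (hT_eq w hw).trans_lt (EReal.coe_lt_top _)
  have hbound (z) (hz : z ∈ edom h) : ∃ r : ℝ, ∀ w ∈ T, z.2 w.1 + w.2 z.1 - w.2 w.1 ≤ r := by
    have hbot : h z ≠ ⊥ := ne_bot_of_le_ne_bot (EReal.coe_ne_bot _) (hmaj z)
    exact ⟨(h z).toReal, fun w hw => fitzpatrick_le_of_erConvex hconv hmaj
      (EReal.coe_toReal (ne_of_lt hz) hbot).symm (hT_eq w hw)⟩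
  have hfst : Prod.fst '' edom h ⊆ closure (convexHull ℝ (Prod.fst '' T)) := by
    rintro _ ⟨z, hz, rfl⟩
    obtain ⟨r, hr⟩ := hbound z hz
    exact hT.fst_mem_closure_convexHull hr
  have hsnd : Prod.snd '' edom h ⊆ wcl X (convexHull ℝ (Prod.snd '' T)) := by
    rintro _ ⟨z, hz, rfl⟩
    obtain ⟨r, hr⟩ := hbound z hz
    exact hT.snd_mem_wcl_convexHull hr
  have hdom : Convex ℝ (edom h) := hconv.convex_edom
  exact ⟨(closure_minimal hfst isClosed_closure).antisymm (closure_mono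
      (convexHull_min (image_mono hT_sub) (hdom.linear_image (LinearMap.fst ℝ _ _)))),
    (wcl_minimal hsnd).antisymm (wcl_mono
      (convexHull_min (image_mono hT_sub) (hdom.linear_image (LinearMap.snd ℝ _ _))))⟩

theorem statement11 (X : Type*) [NormedAddCommGroup X] [NormedSpace ℝ X] [CompleteSpace X]
    (T : Set (X × StrongDual ℝ X)) (hT : MaxMonotone X T) :
    ∀ h ∈ FitzFamily X T,
      closure (Prod.fst '' edom h) = closure (convexHull ℝ (Prod.fst '' T)) ∧
      wcl X (Prod.snd '' edom h) = wcl X (convexHull ℝ (Prod.snd '' T)) :=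
  statement11_general X T hT
end

section
/- Let T : X ⇉ X* be a maximal monotone operator. Then D((δ_{D(T)})*) ⊆ 0⁺(cl_{w*} conv R(T)), i.e. every x* ∈ X* at which the support function of D(T) is finite is a recession direction of the weak-* closed convex hull of R(T); and D((δ_{R(T)})*) ∩ X ⊆ 0⁺(cl conv D(T)), i.e. every x ∈ X (viewed in X** via the canonical embedding) at which the support function of R(T) is finite is a recession direction of the norm-closed convex hull of D(T). -/
/-
If `x*` is bounded above on `D(T)` and `x`, as a functional on `X*`, is bounded above on `R(T)`,
then `⟨x, x*⟩ ≤ 0`: otherwise, for `(x₀, x₀*) ∈ T` and `λ` large, the pair `(x₀ + λx, x₀* + λx*)`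
is monotonically related to `T`, hence lies in `T` by maximality, while `x*` is unbounded along it.
Both inclusions then follow by separation: `u` is a recession direction of a closed convex set `C`
once every continuous functional bounded above on `C` is nonpositive at `u`, and the weak-*
continuous functionals on `X*` are the evaluations at points of `X`.
-/

open NormedSpace Classical

open Set

theorem preimage_recc_subset_recc_preimage {E F G : Type*} [AddCommGroup E] [Module ℝ E]
    [AddCommGroup F] [Module ℝ F] [FunLike G E F] [LinearMapClass G ℝ E F] (f : G) (S : Set F) :
    f ⁻¹' recc S ⊆ recc (f ⁻¹' S) := by
  intro u hu z hz t ht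
  simpa only [mem_preimage, map_add, map_smul] using hu (f z) hz t ht

theorem mem_recc_of_forall_bddAbove {E : Type*} [AddCommGroup E] [Module ℝ E]
    [TopologicalSpace E] [IsTopologicalAddGroup E] [ContinuousSMul ℝ E] [LocallyConvexSpace ℝ E]
    {C : Set E} (hconv : Convex ℝ C) (hclosed : IsClosed C) {u : E}
    (hu : ∀ f : StrongDual ℝ E, BddAbove (f '' C) → f u ≤ 0) : u ∈ recc C := by
  intro z hz t ht
  by_contra hzt
  obtain ⟨f, s, hfC, hsf⟩ := geometric_hahn_banach_closed_point hconv hclosed hzt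
  have hfu : f u ≤ 0 := hu f ⟨s, forall_mem_image.2 fun y hy => (hfC y hy).le⟩
  have hshift : f (z + t • u) ≤ f z := by
    simpa only [map_add, map_smul, smul_eq_mul, add_le_iff_nonpos_right]
      using mul_nonpos_of_nonneg_of_nonpos ht hfu
  linarith [hfC z hz]

instance WeakDual.instLocallyConvexSpace {X : Type*} [AddCommGroup X] [TopologicalSpace X]
    [Module ℝ X] : LocallyConvexSpace ℝ (WeakDual ℝ X) :=
  WeakBilin.locallyConvexSpace

theorem bddAbove_image_of_conj1_indic_lt_top {E : Type*} [NormedAddCommGroup E]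
    [NormedSpace ℝ E] {C : Set E} {p : StrongDual ℝ E} (h : conj1 E (indic C) p < ⊤) :
    BddAbove (p '' C) := by
  obtain ⟨M, hpM, -⟩ := EReal.lt_iff_exists_real_btwn.1 h
  refine ⟨M, forall_mem_image.2 fun y hy => ?_⟩
  have hy' : (p y : EReal) ≤ conj1 E (indic C) p :=
    le_trans (by simp [indic, hy]) (le_iSup (fun x => (p x : EReal) - indic C x) y)
  exact_mod_cast (hy'.trans_lt hpM).le

namespace MaxMonotone

variable {X : Type*} [NormedAddCommGroup X] [NormedSpace ℝ X] {T : Set (X × StrongDual ℝ X)}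

theorem mem_of_forall_monotone (hT : MaxMonotone X T) {q : X × StrongDual ℝ X}
    (hq : ∀ p ∈ T, 0 ≤ (q.2 - p.2) (q.1 - p.1)) : q ∈ T := by
  have hswap : ∀ p ∈ T, 0 ≤ (p.2 - q.2) (p.1 - q.1) := fun p hp => by
    rw [← neg_sub q.2, ← neg_sub q.1, neg_apply, map_neg, neg_neg]
    exact hq p hp
  have hmono : MonotoneSet X (insert q T) := by
    rintro p (rfl | hp) r (rfl | hr)
    · simp
    · exact hq r hr
    · exact hswap p hp
    · exact hT.1 p hp r hr
  exact hT.2 _ hmono (subset_insert q T) ▸ mem_insert q T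

theorem nonempty (hT : MaxMonotone X T) : T.Nonempty := by
  rcases T.eq_empty_or_nonempty with hempty | hne
  · exact ⟨0, hT.mem_of_forall_monotone (by simp [hempty])⟩
  · exact hne

theorem apply_nonpos_of_bddAbove (hT : MaxMonotone X T) {x : X} {x' : StrongDual ℝ X}
    (hdom : BddAbove ((fun p => x' p.1) '' T)) (hran : BddAbove ((fun p => p.2 x) '' T)) :
    x' x ≤ 0 := by
  obtain ⟨M₁, hM₁⟩ := hdom
  obtain ⟨M₂, hM₂⟩ := hran
  rw [mem_upperBounds, forall_mem_image] at hM₁ hM₂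
  obtain ⟨p₀, hp₀⟩ := hT.nonempty
  by_contra! hpos
  set A := x' p₀.1 - M₁ + (p₀.2 x - M₂)
  have hA : A ≤ 0 := by linarith [hM₁ hp₀, hM₂ hp₀]
  set l := (1 - A) / x' x
  have hlc : l * x' x = 1 - A := div_mul_cancel₀ _ hpos.ne'
  have hl : 0 ≤ l := div_nonneg (by linarith) hpos.le
  have hq : (p₀.1 + l • x, p₀.2 + l • x') ∈ T := hT.mem_of_forall_monotone fun p hp => by
    have hexpand : (p₀.2 + l • x' - p.2) (p₀.1 + l • x - p.1) = (p₀.2 - p.2) (p₀.1 - p.1) +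
        l * ((p₀.2 x - p.2 x) + (x' p₀.1 - x' p.1)) + l * (l * x' x) := by
      simp only [sub_apply, add_apply, smul_apply, map_add, map_sub, map_smul, smul_eq_mul]
      ring
    rw [hexpand, hlc]
    nlinarith [hT.1 p₀ hp₀ p hp, hM₁ hp, hM₂ hp]
  have hbound := hM₁ hq
  simp only [map_add, map_smul, smul_eq_mul] at hbound
  linarith [hM₂ hp₀]

end MaxMonotone

theorem statement12_general (X : Type*) [NormedAddCommGroup X] [NormedSpace ℝ X]
    (T : Set (X × StrongDual ℝ X)) (hT : MaxMonotone X T) :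
    edom (conj1 X (indic (Prod.fst '' T))) ⊆
      recc (wcl X (convexHull ℝ (Prod.snd '' T))) ∧
    {x : X | conj1 (StrongDual ℝ X) (indic (Prod.snd '' T)) (inclusionInDoubleDual ℝ X x) < ⊤} ⊆
      recc (closure (convexHull ℝ (Prod.fst '' T))) := by
  constructor
  · intro x' hx'
    have hdom : BddAbove ((fun p => x' p.1) '' T) := by
      simpa only [image_image] using bddAbove_image_of_conj1_indic_lt_top hx'
    suffices hrec : StrongDual.toWeakDual x' ∈
        recc (closure (StrongDual.toWeakDual '' convexHull ℝ (Prod.snd '' T))) from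
      preimage_recc_subset_recc_preimage StrongDual.toWeakDual _ hrec
    refine mem_recc_of_forall_bddAbove (((convex_convexHull ℝ _).linear_image _).closure)
      isClosed_closure fun f hf => ?_
    -- weak-* continuous functionals are evaluations at points of `X`
    obtain ⟨x, rfl⟩ := LinearMap.dualEmbedding_surjective (topDualPairing ℝ X) f
    refine hT.apply_nonpos_of_bddAbove hdom (hf.mono ?_)
    rintro _ ⟨p, hp, rfl⟩
    exact ⟨_, subset_closure (mem_image_of_mem _ (subset_convexHull ℝ _ (mem_image_of_mem _ hp))),
      rfl⟩
  · intro x hx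
    have hran : BddAbove ((fun p => p.2 x) '' T) := by
      simpa only [image_image, dual_def] using bddAbove_image_of_conj1_indic_lt_top hx
    refine mem_recc_of_forall_bddAbove (convex_convexHull ℝ _).closure isClosed_closure
      fun f hf => hT.apply_nonpos_of_bddAbove (hf.mono ?_) hran
    rintro _ ⟨p, hp, rfl⟩
    exact ⟨_, subset_closure (subset_convexHull ℝ _ (mem_image_of_mem _ hp)), rfl⟩

theorem statement12 (X : Type*) [NormedAddCommGroup X] [NormedSpace ℝ X] [CompleteSpace X]
    (T : Set (X × StrongDual ℝ X)) (hT : MaxMonotone X T) :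
    edom (conj1 X (indic (Prod.fst '' T))) ⊆
      recc (wcl X (convexHull ℝ (Prod.snd '' T))) ∧
    {x : X | conj1 (StrongDual ℝ X) (indic (Prod.snd '' T)) (inclusionInDoubleDual ℝ X x) < ⊤} ⊆
      recc (closure (convexHull ℝ (Prod.fst '' T))) :=
  statement12_general X T hT
end

section
/- If T : X ⇉ X* is a maximal monotone operator whose domain D(T) is bounded, then the convex hull of the range R(T) is dense in X* for the weak-* topology. -/
open NormedSpace Classical

/-
Suppose some `x*` is not in the weak-* closed convex hull of `R(T)`. A weak-* continuous
functional on `X*` is evaluation at some `x ∈ X`, so Hahn–Banach gives `x` and `ε > 0` with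
`⟨x, x* - y*⟩ ≥ ε` for every `(y, y*) ∈ T`. Fix `(z, z*) ∈ T`. For `t` large,
`⟨z + t x - y, x* - y*⟩ ≥ -‖x* - z*‖ ‖z - y‖ + t ε ≥ 0` because `D(T)` is bounded, so
`(z + t x, x*)` is monotonically related to `T`; by maximality it lies in `T`, whence `x* ∈ R(T)`.
-/

section

variable {X : Type*} [NormedAddCommGroup X] [NormedSpace ℝ X] {T : Set (X × StrongDual ℝ X)}

theorem MaxMonotone.nonempty_s13 (hT : MaxMonotone X T) : T.Nonempty := by
  refine Set.nonempty_iff_ne_empty.2 fun hT₀ => ?_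
  have hsingleton : MonotoneSet X {(0, 0)} := by
    rintro p rfl q rfl
    simp
  have := hT.2 _ hsingleton (hT₀ ▸ Set.empty_subset _)
  simp [hT₀] at this

theorem MaxMonotone.mem_of_forall_le (hT : MaxMonotone X T) {p : X × StrongDual ℝ X}
    (hp : ∀ q ∈ T, 0 ≤ (p.2 - q.2) (p.1 - q.1)) : p ∈ T := by
  have hmono : MonotoneSet X (insert p T) := by
    have hswap : ∀ q : X × StrongDual ℝ X, (q.2 - p.2) (q.1 - p.1) = (p.2 - q.2) (p.1 - q.1) :=
      fun q => by simp only [sub_apply, map_sub]; ring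
    rintro q (rfl | hq) r (rfl | hr)
    · simp
    · exact hp r hr
    · exact hswap q ▸ hp q hq
    · exact hT.1 q hq r hr
  exact hT.2 _ hmono (Set.subset_insert _ _) ▸ Set.mem_insert p T

theorem MonotoneSet.neg_norm_mul_le (hT : MonotoneSet X T) {z y : X} {zs ys : StrongDual ℝ X}
    (hz : (z, zs) ∈ T) (hy : (y, ys) ∈ T) (xs : StrongDual ℝ X) :
    -(‖xs - zs‖ * ‖z - y‖) ≤ (xs - ys) (z - y) :=
  calc -(‖xs - zs‖ * ‖z - y‖) ≤ (xs - zs) (z - y) :=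
        neg_le_of_abs_le ((xs - zs).le_opNorm (z - y))
    _ ≤ (xs - zs) (z - y) + (zs - ys) (z - y) := le_add_of_nonneg_right (hT _ hz _ hy)
    _ = (xs - ys) (z - y) := by simp only [sub_apply]; ring

theorem MaxMonotone.mem_range_of_le_sub_apply (hT : MaxMonotone X T) {M : ℝ}
    (hM : ∀ p ∈ T, ‖p.1‖ ≤ M) {xs : StrongDual ℝ X} {x : X} {ε : ℝ} (hε : 0 < ε)
    (hgap : ∀ p ∈ T, ε ≤ (xs - p.2) x) : xs ∈ Prod.snd '' T := by
  obtain ⟨⟨z, zs⟩, hz⟩ := hT.nonempty_s13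
  set t := ‖xs - zs‖ * (M + ‖z‖) / ε
  have ht : 0 ≤ t :=
    div_nonneg (mul_nonneg (norm_nonneg _) (by linarith [norm_nonneg z, hM _ hz])) hε.le
  refine ⟨(z + t • x, xs), hT.mem_of_forall_le fun ⟨y, ys⟩ hy => ?_, rfl⟩
  have hzy : ‖xs - zs‖ * ‖z - y‖ ≤ t * ε := by
    rw [div_mul_cancel₀ _ hε.ne']
    gcongr
    linarith [norm_sub_le z y, hM _ hy]
  have htε : t * ε ≤ t * (xs - ys) x := mul_le_mul_of_nonneg_left (hgap _ hy) ht
  calc (0 : ℝ) ≤ (xs - ys) (z - y) + t * (xs - ys) x := by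
        linarith [hT.1.neg_norm_mul_le hz hy xs]
    _ = (xs - ys) (z + t • x - y) := by
        rw [add_sub_right_comm, map_add, map_smul, smul_eq_mul]

theorem WeakDual.exists_eq_apply (f : StrongDual ℝ (WeakDual ℝ X)) :
    ∃ x : X, ∀ y : WeakDual ℝ X, f y = y x := by
  obtain ⟨x, hx⟩ := LinearMap.dualEmbedding_surjective (topDualPairing ℝ X) f
  exact ⟨x, fun y => by rw [← hx]; rfl⟩

theorem subset_wcl (S : Set (StrongDual ℝ X)) : S ⊆ wcl X S :=
  fun s hs => show StrongDual.toWeakDual s ∈ closure _ from subset_closure ⟨s, hs, rfl⟩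

theorem exists_apply_lt_of_notMem_wcl {S : Set (StrongDual ℝ X)} (hS : Convex ℝ S)
    {xs : StrongDual ℝ X} (hxs : xs ∉ wcl X S) :
    ∃ x : X, ∃ u : ℝ, (∀ s ∈ S, s x < u) ∧ u < xs x := by
  have : LocallyConvexSpace ℝ (WeakDual ℝ X) := WeakBilin.locallyConvexSpace
  have hconv : Convex ℝ (closure (StrongDual.toWeakDual '' S)) :=
    (hS.linear_image StrongDual.toWeakDual.toLinearMap).closure
  obtain ⟨f, u, hfS, hfxs⟩ := geometric_hahn_banach_closed_point hconv isClosed_closure hxs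
  obtain ⟨x, hx⟩ := WeakDual.exists_eq_apply f
  exact ⟨x, u, fun s hs => hx _ ▸ hfS _ (subset_wcl S hs), hx _ ▸ hfxs⟩

end

theorem statement13_general (X : Type*) [NormedAddCommGroup X] [NormedSpace ℝ X]
    (T : Set (X × StrongDual ℝ X)) (hT : MaxMonotone X T)
    (hbdd : Bornology.IsBounded (Prod.fst '' T)) :
    wcl X (convexHull ℝ (Prod.snd '' T)) = Set.univ := by
  refine Set.eq_univ_of_forall fun xs => by_contra fun hxs => hxs ?_
  obtain ⟨x, u, hsep, hux⟩ := exists_apply_lt_of_notMem_wcl (convex_convexHull ℝ _) hxs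
  obtain ⟨M, hM⟩ := isBounded_iff_forall_norm_le.1 hbdd
  have hgap : ∀ p ∈ T, xs x - u ≤ (xs - p.2) x := fun p hp => by
    have := hsep p.2 (subset_convexHull ℝ _ ⟨p, hp, rfl⟩)
    simp only [sub_apply]
    linarith
  have hrange : xs ∈ Prod.snd '' T :=
    hT.mem_range_of_le_sub_apply (fun p hp => hM _ ⟨p, hp, rfl⟩) (sub_pos.2 hux) hgap
  exact subset_wcl _ (subset_convexHull ℝ _ hrange)

theorem statement13 (X : Type*) [NormedAddCommGroup X] [NormedSpace ℝ X] [CompleteSpace X]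
    (T : Set (X × StrongDual ℝ X)) (hT : MaxMonotone X T)
    (hbdd : Bornology.IsBounded (Prod.fst '' T)) :
    wcl X (convexHull ℝ (Prod.snd '' T)) = Set.univ :=
  statement13_general X T hT hbdd
end

section
/- Let T : X ⇉ X* be a maximal monotone operator. The following are equivalent: (1) R(T) is bounded; (2) for every h ∈ F_T, P₂(D(h)) is bounded; (3) there exists h ∈ F_T such that P₂(D(h)) is bounded; (4) there exists 0 ≤ L < ∞ such that for every h ∈ F_T and every x* ∈ P₂(D(h)), the function x ↦ h(x,x*) is real-valued and |h(x,x*) − h(z,x*)| ≤ L‖x − z‖ for all x, z ∈ X; (5) there exist h ∈ F_T and 0 ≤ L < ∞ such that for every x* ∈ P₂(D(h)), the function x ↦ h(x,x*) is real-valued and |h(x,x*) − h(z,x*)| ≤ L‖x − z‖ for all x, z ∈ X. -/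
open NormedSpace Classical

/-!
If `‖x*‖ ≤ M` on `R(T)`, the Debrunner–Flor lemma (a finite-dimensional minimax argument, here
a separation in `ℝⁿ`, combined with weak-* compactness of the ball) gives every `x` some `x*` with
`‖x*‖ ≤ M` monotonically related to `T`, so maximality forces `D(T) = X`. For `h ∈ F_T` and
`t → 0⁺`, the points `(1 - t) (z, y) + t (w, w*)` with `w = z + t⁻¹ (x - z)` and `(w, w*) ∈ T`
tend to `(x, y)`, and convexity plus lower semicontinuity give `h(x, y) ≤ h(z, y) + M ‖x - z‖`.
Conversely `⟨x, y⟩ ≤ h(x, y) ≤ h(0, y) + L ‖x‖` forces `‖y‖ ≤ L`, and `T ⊆ D(h)` because `h`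
is the duality product on `T`. The Fitzpatrick function shows that `F_T` is nonempty.
-/

open Filter Topology
open scoped Matrix

section Copositive

variable {ι : Type*} [Fintype ι]

theorem exists_nonneg_dotProduct_neg_of_disjoint_Ici {K : Set (ι → ℝ)} (hKc : Convex ℝ K)
    (hK : IsCompact K) (hdisj : Disjoint K (Set.Ici 0)) :
    ∃ m : ι → ℝ, 0 ≤ m ∧ ∀ k ∈ K, m ⬝ᵥ k < 0 := by
  obtain ⟨g, u, v, hgK, huv, hgO⟩ :=
    geometric_hahn_banach_compact_closed hKc hK (convex_Ici 0) isClosed_Ici hdisj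
  have hv : v < 0 := by simpa using hgO 0 (Set.mem_Ici.2 le_rfl)
  -- `g` is bounded below on the cone `Ici 0`, hence nonnegative there
  have hg_nonneg : ∀ o, 0 ≤ o → 0 ≤ g o := by
    intro o ho
    by_contra! hneg
    have := hgO (((v - 1) / g o) • o) (smul_nonneg (div_nonneg_of_nonpos (by linarith) hneg.le) ho)
    rw [map_smul, smul_eq_mul, div_mul_cancel₀ _ hneg.ne] at this
    linarith
  refine ⟨fun i => g (Pi.single i 1), fun i => hg_nonneg _ (Pi.single_nonneg.2 zero_le_one),
    fun k hk => ?_⟩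
  have hgk : g k = (fun i => g (Pi.single i 1)) ⬝ᵥ k := by
    conv_lhs => rw [← Finset.univ_sum_single k]
    refine (map_sum g _ _).trans (Finset.sum_congr rfl fun i _ => ?_)
    rw [show Pi.single i (k i) = k i • Pi.single i (1 : ℝ) by simp [← Pi.single_smul'],
      map_smul, smul_eq_mul, mul_comm]
  linarith [hgK k hk]

theorem Matrix.exists_mem_stdSimplex_mulVec_nonneg [Nonempty ι] (A : Matrix ι ι ℝ)
    (hA : ∀ l ∈ stdSimplex ℝ ι, 0 ≤ l ⬝ᵥ A *ᵥ l) : ∃ l ∈ stdSimplex ℝ ι, 0 ≤ A *ᵥ l := by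
  by_contra! hneg
  have hdisj : Disjoint (A.mulVecLin '' stdSimplex ℝ ι) (Set.Ici 0) := by
    rw [Set.disjoint_left]
    rintro _ ⟨l, hl, rfl⟩
    exact hneg l hl
  obtain ⟨m, hm0, hm⟩ := exists_nonneg_dotProduct_neg_of_disjoint_Ici
    ((convex_stdSimplex ℝ ι).linear_image _)
    ((isCompact_stdSimplex ℝ ι).image A.mulVecLin.continuous_of_finiteDimensional) hdisj
  have hsum : 0 < ∑ i, m i := by
    refine (Finset.sum_nonneg fun i _ => hm0 i).lt_of_ne fun hzero => ?_
    have hm_zero : m = 0 := funext fun i =>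
      (Finset.sum_eq_zero_iff_of_nonneg fun i _ => hm0 i).1 hzero.symm i (Finset.mem_univ i)
    obtain ⟨i⟩ := ‹Nonempty ι›
    simpa [hm_zero] using hm _ ⟨_, single_mem_stdSimplex ℝ i, rfl⟩
  have hl : (∑ i, m i)⁻¹ • m ∈ stdSimplex ℝ ι :=
    ⟨fun i => mul_nonneg (inv_nonneg.2 hsum.le) (hm0 i), by
      simp only [Pi.smul_apply, smul_eq_mul, ← Finset.mul_sum, inv_mul_cancel₀ hsum.ne']⟩
  have hlt := hm _ ⟨_, hl, rfl⟩
  have hge := hA _ hl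
  rw [Matrix.mulVecLin_apply, Matrix.mulVec_smul, dotProduct_smul, smul_eq_mul] at hlt
  rw [Matrix.mulVec_smul, smul_dotProduct, dotProduct_smul, smul_eq_mul, smul_eq_mul] at hge
  nlinarith [inv_pos.2 hsum]

end Copositive

section Monotone

variable {X : Type*} [NormedAddCommGroup X] [NormedSpace ℝ X]

/-- `z` is monotonically related to `T` if `T ∪ {z}` is still monotone. -/
def MonotonicallyRelated (T : Set (X × StrongDual ℝ X)) (z : X × StrongDual ℝ X) : Prop :=
  ∀ w ∈ T, 0 ≤ (z.2 - w.2) (z.1 - w.1)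

lemma dual_sub_apply_sub_comm (p q : StrongDual ℝ X) (u v : X) :
    (p - q) (u - v) = (q - p) (v - u) := by
  simp only [sub_apply, map_sub]
  ring

theorem exists_mem_stdSimplex_monotonicallyRelated_sum_smul {ι : Type*} [Fintype ι] [Nonempty ι]
    (v : ι → X × StrongDual ℝ X) (hmono : MonotoneSet X (Set.range v)) (x₀ : X) :
    ∃ l ∈ stdSimplex ℝ ι, MonotonicallyRelated (Set.range v) (x₀, ∑ j, l j • (v j).2) := by
  set A : Matrix ι ι ℝ := Matrix.of fun i j => ((v j).2 - (v i).2) (x₀ - (v i).1)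
  have hAl : ∀ l ∈ stdSimplex ℝ ι, ∀ i,
      (A *ᵥ l) i = (∑ j, l j • (v j).2 - (v i).2) (x₀ - (v i).1) := by
    intro l hl i
    have hsum : ∑ j, l j = 1 := hl.2
    simp only [A, Matrix.mulVec, dotProduct, Matrix.of_apply, sub_apply, sum_apply, smul_apply,
      smul_eq_mul, mul_sub, Finset.sum_sub_distrib, ← Finset.sum_mul, hsum, one_mul, mul_comm]
  -- monotonicity of the family is entrywise nonnegativity of `A + Aᵀ`
  have hsymm : ∀ i j, 0 ≤ (A + A.transpose) i j := by
    intro i j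
    simp only [A, Matrix.add_apply, Matrix.transpose_apply, Matrix.of_apply]
    convert hmono _ ⟨j, rfl⟩ _ ⟨i, rfl⟩ using 1
    simp only [sub_apply, map_sub]
    ring
  obtain ⟨l, hl, hAl_nonneg⟩ := A.exists_mem_stdSimplex_mulVec_nonneg fun l hl => by
    have h2 : 2 * (l ⬝ᵥ A *ᵥ l) = l ⬝ᵥ (A + A.transpose) *ᵥ l := by
      rw [Matrix.add_mulVec, dotProduct_add, Matrix.dotProduct_mulVec l A.transpose,
        Matrix.vecMul_transpose, dotProduct_comm (A *ᵥ l), two_mul]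
    have : 0 ≤ l ⬝ᵥ (A + A.transpose) *ᵥ l :=
      Finset.sum_nonneg fun i _ => mul_nonneg (hl.1 i) <|
        Finset.sum_nonneg fun j _ => mul_nonneg (hsymm i j) (hl.1 j)
    linarith
  refine ⟨l, hl, ?_⟩
  rintro _ ⟨i, rfl⟩
  exact hAl l hl i ▸ hAl_nonneg i

theorem exists_norm_le_monotonicallyRelated {T : Set (X × StrongDual ℝ X)} (hT : MonotoneSet X T)
    {M : ℝ} (hM0 : 0 ≤ M) (hM : ∀ w ∈ T, ‖w.2‖ ≤ M) (x₀ : X) :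
    ∃ p : StrongDual ℝ X, ‖p‖ ≤ M ∧ MonotonicallyRelated T (x₀, p) := by
  set K : Set (WeakDual ℝ X) := WeakDual.toStrongDual ⁻¹' Metric.closedBall 0 M
  set t : T → Set (WeakDual ℝ X) := fun w =>
    {φ | MonotonicallyRelated {w.1} (x₀, WeakDual.toStrongDual φ)}
  have ht : ∀ w, IsClosed (t w) := fun w => by
    simp only [t, MonotonicallyRelated, Set.mem_singleton_iff, forall_eq, sub_apply]
    exact isClosed_le continuous_const ((WeakDual.eval_continuous _).sub continuous_const)
  have hfin : ∀ u : Finset T, (K ∩ ⋂ w ∈ u, t w).Nonempty := by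
    intro u
    rcases u.eq_empty_or_nonempty with rfl | ⟨w₀, hw₀⟩
    · exact ⟨0, by simpa [K] using hM0, by simp⟩
    have : Nonempty u := ⟨⟨w₀, hw₀⟩⟩
    have hsub : Set.range (fun i : u => i.1.1) ⊆ T := Set.range_subset_iff.2 fun i => i.1.2
    obtain ⟨l, hl, hrel⟩ := exists_mem_stdSimplex_monotonicallyRelated_sum_smul
      (fun i : u => i.1.1) (fun p hp q hq => hT p (hsub hp) q (hsub hq)) x₀
    refine ⟨StrongDual.toWeakDual (∑ j, l j • j.1.1.2), ?_,
      Set.mem_iInter₂.2 fun w hw _ hq => (Set.mem_singleton_iff.1 hq) ▸ hrel _ ⟨⟨w, hw⟩, rfl⟩⟩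
    exact (convex_closedBall 0 M).sum_mem (fun j _ => hl.1 j) hl.2 fun j _ => by
      simpa using hM _ j.1.2
  obtain ⟨φ, hφK, hφt⟩ := (WeakDual.isCompact_closedBall 0 M).inter_iInter_nonempty t ht hfin
  refine ⟨WeakDual.toStrongDual φ, by simpa [K] using hφK, fun w hw => ?_⟩
  exact Set.mem_iInter.1 hφt ⟨w, hw⟩ w rfl

theorem MaxMonotone.mem_of_monotonicallyRelated {T : Set (X × StrongDual ℝ X)}
    (hT : MaxMonotone X T) {z : X × StrongDual ℝ X} (hz : MonotonicallyRelated T z) : z ∈ T := by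
  have hmono : MonotoneSet X (insert z T) := by
    rintro p (rfl | hp) q (rfl | hq)
    · simp
    · exact hz q hq
    · rw [dual_sub_apply_sub_comm]
      exact hz p hp
    · exact hT.1 p hp q hq
  exact hT.2 _ hmono (Set.subset_insert z T) ▸ Set.mem_insert z T

theorem MaxMonotone.exists_mem_of_norm_le {T : Set (X × StrongDual ℝ X)} (hT : MaxMonotone X T)
    {M : ℝ} (hM0 : 0 ≤ M) (hM : ∀ w ∈ T, ‖w.2‖ ≤ M) (x : X) : ∃ p, (x, p) ∈ T :=
  let ⟨p, _, hp⟩ := exists_norm_le_monotonicallyRelated hT.1 hM0 hM x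
  ⟨p, hT.mem_of_monotonicallyRelated hp⟩

end Monotone

section ErConvex

variable {E : Type*} [AddCommGroup E] [Module ℝ E]

theorem ConvexOn.erConvex_coe {f : E → ℝ} (hf : ConvexOn ℝ Set.univ f) :
    ErConvex (fun x => (f x : EReal)) := fun x y a b ha hb hab => by
  rw [← EReal.coe_mul, ← EReal.coe_mul, ← EReal.coe_add, EReal.coe_le_coe_iff]
  exact hf.2 (Set.mem_univ x) (Set.mem_univ y) ha hb hab

theorem ErConvex.iSup {ι : Type*} {f : ι → E → EReal} (hf : ∀ i, ErConvex (f i)) :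
    ErConvex (fun x => ⨆ i, f i x) := fun x y a b ha hb hab =>
  iSup_le fun i => (hf i x y a b ha hb hab).trans <|
    add_le_add (mul_le_mul_of_nonneg_left (le_iSup (f · x) i) (EReal.coe_nonneg.2 ha))
      (mul_le_mul_of_nonneg_left (le_iSup (f · y) i) (EReal.coe_nonneg.2 hb))

end ErConvex

section Fitzpatrick

variable {X : Type*} [NormedAddCommGroup X] [NormedSpace ℝ X]

noncomputable def fitzpatrick (T : Set (X × StrongDual ℝ X)) (z : X × StrongDual ℝ X) : EReal :=
  ⨆ w : T, ((w.1.2 z.1 + z.2 w.1.1 - w.1.2 w.1.1 : ℝ) : EReal)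

lemma fitzpatrick_term_eq (w z : X × StrongDual ℝ X) :
    w.2 z.1 + z.2 w.1 - w.2 w.1 = z.2 z.1 - (z.2 - w.2) (z.1 - w.1) := by
  simp only [sub_apply, map_sub]
  ring

lemma convexOn_fitzpatrick_term (w : X × StrongDual ℝ X) :
    ConvexOn ℝ Set.univ (fun z : X × StrongDual ℝ X => w.2 z.1 + z.2 w.1 - w.2 w.1) := by
  refine ⟨convex_univ, fun x _ y _ a b _ _ hab => le_of_eq ?_⟩
  simp only [Prod.fst_add, Prod.snd_add, Prod.smul_fst, Prod.smul_snd, map_add, map_smul,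
    add_apply, smul_apply, smul_eq_mul]
  linear_combination (w.2 w.1) * hab

theorem fitzpatrick_le_pairE {T : Set (X × StrongDual ℝ X)} (hT : MonotoneSet X T)
    {z : X × StrongDual ℝ X} (hz : z ∈ T) : fitzpatrick T z ≤ pairE X z :=
  iSup_le fun w => EReal.coe_le_coe_iff.2 <| by
    rw [fitzpatrick_term_eq]
    linarith [hT z hz w.1 w.2]

theorem MaxMonotone.pairE_le_fitzpatrick {T : Set (X × StrongDual ℝ X)} (hT : MaxMonotone X T)
    (z : X × StrongDual ℝ X) : pairE X z ≤ fitzpatrick T z := by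
  by_contra! hlt
  -- otherwise `z` would be monotonically related to `T`, hence in `T`
  have hz : z ∈ T := hT.mem_of_monotonicallyRelated fun w hw => by
    have := (le_iSup (fun w : T => ((w.1.2 z.1 + z.2 w.1.1 - w.1.2 w.1.1 : ℝ) : EReal))
      ⟨w, hw⟩).trans_lt hlt
    rw [pairE, EReal.coe_lt_coe_iff, fitzpatrick_term_eq] at this
    linarith
  refine hlt.not_ge (le_iSup_of_le ⟨z, hz⟩ (le_of_eq ?_))
  simp [pairE]

theorem fitzpatrick_mem_fitzFamily {T : Set (X × StrongDual ℝ X)} (hT : MaxMonotone X T) :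
    fitzpatrick T ∈ FitzFamily X T :=
  ⟨ErConvex.iSup fun w => (convexOn_fitzpatrick_term w.1).erConvex_coe,
    lowerSemicontinuous_iSup fun w =>
      (continuous_coe_real_ereal.comp (by fun_prop)).lowerSemicontinuous,
    hT.pairE_le_fitzpatrick,
    fun z hz => (fitzpatrick_le_pairE hT.1 hz).antisymm (hT.pairE_le_fitzpatrick z)⟩

end Fitzpatrick

theorem LowerSemicontinuousAt.le_of_tendsto {α β γ : Type*} [TopologicalSpace α] [LinearOrder γ]
    [DenselyOrdered γ] [TopologicalSpace γ] [ClosedIciTopology γ] {f : α → γ} {a : α}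
    (hf : LowerSemicontinuousAt f a) {l : Filter β} [l.NeBot] {g : β → α}
    (hg : Tendsto g l (𝓝 a)) {u : β → γ} {b : γ} (hu : Tendsto u l (𝓝 b))
    (hfu : ∀ᶠ t in l, f (g t) ≤ u t) : f a ≤ b :=
  le_of_forall_lt_imp_le_of_dense fun c hc => ge_of_tendsto hu <|
    ((hg.eventually (hf c hc)).and hfu).mono fun _ ht => (ht.1.trans_le ht.2).le

theorem ContinuousLinearMap.norm_le_of_le_add_mul_norm {E : Type*} [NormedAddCommGroup E]
    [NormedSpace ℝ E] {f : StrongDual ℝ E} {c L : ℝ} (hL : 0 ≤ L)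
    (hf : ∀ x, f x ≤ c + L * ‖x‖) : ‖f‖ ≤ L := by
  have hle : ∀ x, f x ≤ L * ‖x‖ := by
    intro x
    by_contra! hlt
    set s := (|c| + 1) / (f x - L * ‖x‖)
    have hs : 0 < s := div_pos (by positivity) (sub_pos.2 hlt)
    have hsx := hf (s • x)
    rw [map_smul, smul_eq_mul, norm_smul, Real.norm_of_nonneg hs.le] at hsx
    have hscale : s * (f x - L * ‖x‖) = |c| + 1 := div_mul_cancel₀ _ (sub_pos.2 hlt).ne'
    nlinarith [le_abs_self c]
  refine f.opNorm_le_bound hL fun x => abs_le.2 ⟨?_, hle x⟩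
  have := hle (-x)
  rw [map_neg, norm_neg] at this
  linarith

section Lipschitz

variable {X : Type*} [NormedAddCommGroup X] [NormedSpace ℝ X]

def HasLipschitzSlices (h : X × StrongDual ℝ X → EReal) (L : ℝ) : Prop :=
  ∀ y ∈ Prod.snd '' edom h, (∀ x : X, h (x, y) ≠ ⊤ ∧ h (x, y) ≠ ⊥) ∧
    ∀ x z : X, |(h (x, y)).toReal - (h (z, y)).toReal| ≤ L * ‖x - z‖

variable {T : Set (X × StrongDual ℝ X)} {h : X × StrongDual ℝ X → EReal}

theorem FitzFamily.ne_bot (hh : h ∈ FitzFamily X T) (z : X × StrongDual ℝ X) : h z ≠ ⊥ :=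
  ne_bot_of_le_ne_bot (EReal.coe_ne_bot _) (hh.2.2.1 z)

theorem FitzFamily.subset_edom (hh : h ∈ FitzFamily X T) : T ⊆ edom h := fun z hz =>
  (hh.2.2.2 z hz).trans_lt (EReal.coe_lt_top _)

theorem FitzFamily.apply_combo_le (hh : h ∈ FitzFamily X T) {z w : X} {y p : StrongDual ℝ X}
    {r t : ℝ} (hr : h (z, y) = r) (hwp : (w, p) ∈ T) (ht0 : 0 ≤ t) (ht1 : t ≤ 1) :
    h ((1 - t) • z + t • w, (1 - t) • y + t • p) ≤ (((1 - t) * r + t * p w : ℝ) : EReal) := by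
  have hconv := hh.1 (z, y) (w, p) (1 - t) t (by linarith) ht0 (by ring)
  rwa [hr, hh.2.2.2 _ hwp, pairE, Prod.smul_mk, Prod.smul_mk, Prod.mk_add_mk, ← EReal.coe_mul,
    ← EReal.coe_mul, ← EReal.coe_add] at hconv

theorem FitzFamily.apply_le_add_of_norm_le (hh : h ∈ FitzFamily X T) {M : ℝ}
    (hM : ∀ w ∈ T, ‖w.2‖ ≤ M) (hD : ∀ x, ∃ p, (x, p) ∈ T) {y : StrongDual ℝ X} {z : X} {r : ℝ}
    (hr : h (z, y) = r) (x : X) : h (x, y) ≤ ((r + M * ‖x - z‖ : ℝ) : EReal) := by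
  choose p hpT using hD
  have hp_le : ∀ w v, p w v ≤ M * ‖v‖ := fun w v =>
    (Real.le_norm_self _).trans ((p w).le_of_opNorm_le (hM _ (hpT w)) v)
  -- `(x, y)` is the limit, as `t → 0⁺`, of `(1 - t) • (z, y) + t • (w t, p (w t))`
  set w : ℝ → X := fun t => z + t⁻¹ • (x - z)
  have hbound : ∀ t ∈ Set.Ioo (0 : ℝ) 1, h (x, (1 - t) • y + t • p (w t)) ≤
      (((1 - t) * r + t * (M * ‖z‖) + M * ‖x - z‖ : ℝ) : EReal) := by
    rintro t ⟨ht0, ht1⟩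
    have hx : (1 - t) • z + t • w t = x := by
      simp only [w, smul_add, smul_smul, mul_inv_cancel₀ ht0.ne', one_smul]
      module
    have hcombo := FitzFamily.apply_combo_le hh hr (hpT (w t)) ht0.le ht1.le
    rw [hx] at hcombo
    refine hcombo.trans (EReal.coe_le_coe_iff.2 ?_)
    have hpw : t * p (w t) (w t) = t * p (w t) z + p (w t) (x - z) := by
      simp only [w, map_add, map_smul, smul_eq_mul]
      field_simp
    nlinarith [hp_le (w t) z, hp_le (w t) (x - z)]
  have hy : Tendsto (fun t => (1 - t) • y + t • p (w t)) (𝓝[>] 0) (𝓝 y) := by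
    have hsmall : Tendsto (fun t : ℝ => t • (p (w t) - y)) (𝓝[>] 0) (𝓝 0) :=
      (tendsto_nhdsWithin_of_tendsto_nhds tendsto_id).zero_smul_isBoundedUnder_le <|
        isBoundedUnder_of ⟨M + ‖y‖, fun t =>
          (norm_sub_le _ _).trans (by linarith [hM _ (hpT (w t))])⟩
    convert (tendsto_const_nhds (x := y)).add hsmall using 1
    · funext t
      module
    · rw [add_zero]
  have hu : Tendsto (fun t : ℝ => (((1 - t) * r + t * (M * ‖z‖) + M * ‖x - z‖ : ℝ) : EReal))
      (𝓝[>] 0) (𝓝 ((r + M * ‖x - z‖ : ℝ) : EReal)) :=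
    ((continuous_coe_real_ereal.comp (by fun_prop)).tendsto' 0 _ (by simp)).mono_left
      nhdsWithin_le_nhds
  exact (hh.2.1.lowerSemicontinuousAt (x, y)).le_of_tendsto
    (tendsto_const_nhds.prodMk_nhds hy) hu (eventually_of_mem (Ioo_mem_nhdsGT zero_lt_one) hbound)

theorem FitzFamily.hasLipschitzSlices (hh : h ∈ FitzFamily X T) {M : ℝ}
    (hM : ∀ w ∈ T, ‖w.2‖ ≤ M) (hD : ∀ x, ∃ p, (x, p) ∈ T) : HasLipschitzSlices h M := by
  rintro _ ⟨⟨z₀, y⟩, hz₀, rfl⟩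
  dsimp only
  have hz₀_real := EReal.coe_toReal hz₀.ne (FitzFamily.ne_bot hh _)
  have hfin : ∀ x, h (x, y) ≠ ⊤ := fun x => ne_top_of_le_ne_top (EReal.coe_ne_top _) <|
    FitzFamily.apply_le_add_of_norm_le hh hM hD hz₀_real.symm x
  have hreal : ∀ x, h (x, y) = ((h (x, y)).toReal : EReal) := fun x =>
    (EReal.coe_toReal (hfin x) (FitzFamily.ne_bot hh _)).symm
  refine ⟨fun x => ⟨hfin x, FitzFamily.ne_bot hh _⟩, fun x z => abs_sub_le_iff.2 ⟨?_, ?_⟩⟩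
  · have := FitzFamily.apply_le_add_of_norm_le hh hM hD (hreal z) x
    rw [hreal x, EReal.coe_le_coe_iff] at this
    linarith
  · have := FitzFamily.apply_le_add_of_norm_le hh hM hD (hreal x) z
    rw [hreal z, EReal.coe_le_coe_iff, norm_sub_rev] at this
    linarith

theorem HasLipschitzSlices.isBounded_image_snd_edom (hge : ∀ z, pairE X z ≤ h z) {L : ℝ}
    (hL : 0 ≤ L) (hlip : HasLipschitzSlices h L) : Bornology.IsBounded (Prod.snd '' edom h) := by
  refine (Metric.isBounded_closedBall (x := 0) (r := L)).subset fun y hy => ?_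
  obtain ⟨hfin, hlip⟩ := hlip y hy
  rw [mem_closedBall_zero_iff]
  refine ContinuousLinearMap.norm_le_of_le_add_mul_norm hL (c := (h (0, y)).toReal) fun x => ?_
  have hpair : y x ≤ (h (x, y)).toReal := by
    have := hge (x, y)
    rwa [pairE, ← EReal.coe_toReal (hfin x).1 (hfin x).2, EReal.coe_le_coe_iff] at this
  have hslice := (abs_le.1 (hlip x 0)).2
  rw [sub_zero] at hslice
  linarith

end Lipschitz

theorem statement14_general (X : Type*) [NormedAddCommGroup X] [NormedSpace ℝ X]
    (T : Set (X × StrongDual ℝ X)) (hT : MaxMonotone X T) :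
    List.TFAE [
      Bornology.IsBounded (Prod.snd '' T),
      ∀ h ∈ FitzFamily X T, Bornology.IsBounded (Prod.snd '' edom h),
      ∃ h ∈ FitzFamily X T, Bornology.IsBounded (Prod.snd '' edom h),
      ∃ L : ℝ, 0 ≤ L ∧ ∀ h ∈ FitzFamily X T, ∀ y ∈ Prod.snd '' edom h,
        (∀ x : X, h (x, y) ≠ ⊤ ∧ h (x, y) ≠ ⊥) ∧
        ∀ x z : X, |(h (x, y)).toReal - (h (z, y)).toReal| ≤ L * ‖x - z‖,
      ∃ h ∈ FitzFamily X T, ∃ L : ℝ, 0 ≤ L ∧ ∀ y ∈ Prod.snd '' edom h,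
        (∀ x : X, h (x, y) ≠ ⊤ ∧ h (x, y) ≠ ⊥) ∧
        ∀ x z : X, |(h (x, y)).toReal - (h (z, y)).toReal| ≤ L * ‖x - z‖ ] := by
  have hφ := fitzpatrick_mem_fitzFamily hT
  tfae_have 1 → 4 := by
    intro hbdd
    obtain ⟨C, hC⟩ := isBounded_iff_forall_norm_le.1 hbdd
    have hM : ∀ w ∈ T, ‖w.2‖ ≤ max C 0 := fun w hw => (hC _ ⟨w, hw, rfl⟩).trans (le_max_left _ _)
    exact ⟨max C 0, le_max_right _ _, fun h hh =>
      FitzFamily.hasLipschitzSlices hh hM (hT.exists_mem_of_norm_le (le_max_right _ _) hM)⟩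
  tfae_have 4 → 2 := fun ⟨L, hL, hlip⟩ h hh =>
    HasLipschitzSlices.isBounded_image_snd_edom hh.2.2.1 hL (hlip h hh)
  tfae_have 2 → 3 := fun h2 => ⟨_, hφ, h2 _ hφ⟩
  tfae_have 3 → 1 := fun ⟨h, hh, hbdd⟩ => hbdd.subset (Set.image_mono (FitzFamily.subset_edom hh))
  tfae_have 4 → 5 := fun ⟨L, hL, hlip⟩ => ⟨_, hφ, L, hL, hlip _ hφ⟩
  tfae_have 5 → 3 := fun ⟨h, hh, L, hL, hlip⟩ =>
    ⟨h, hh, HasLipschitzSlices.isBounded_image_snd_edom hh.2.2.1 hL hlip⟩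
  tfae_finish

theorem statement14 (X : Type*) [NormedAddCommGroup X] [NormedSpace ℝ X] [CompleteSpace X]
    (T : Set (X × StrongDual ℝ X)) (hT : MaxMonotone X T) :
    List.TFAE [
      Bornology.IsBounded (Prod.snd '' T),
      ∀ h ∈ FitzFamily X T, Bornology.IsBounded (Prod.snd '' edom h),
      ∃ h ∈ FitzFamily X T, Bornology.IsBounded (Prod.snd '' edom h),
      ∃ L : ℝ, 0 ≤ L ∧ ∀ h ∈ FitzFamily X T, ∀ y ∈ Prod.snd '' edom h,
        (∀ x : X, h (x, y) ≠ ⊤ ∧ h (x, y) ≠ ⊥) ∧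
        ∀ x z : X, |(h (x, y)).toReal - (h (z, y)).toReal| ≤ L * ‖x - z‖,
      ∃ h ∈ FitzFamily X T, ∃ L : ℝ, 0 ≤ L ∧ ∀ y ∈ Prod.snd '' edom h,
        (∀ x : X, h (x, y) ≠ ⊤ ∧ h (x, y) ≠ ⊥) ∧
        ∀ x z : X, |(h (x, y)).toReal - (h (z, y)).toReal| ≤ L * ‖x - z‖ ] :=
  statement14_general X T hT
end
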